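/- arXiv:2105.10435 — 7 statements merged into one kernel-verified Lean document; each statement's English description precedes it below -/
import Mathlib

section
/- For every δ ≥ 0 the limit H_Z^δ = lim_{T→∞} T^{-d} E[ sup_{t ∈ [0,T]^d ∩ δℤ^d} Z(t) ] (with the convention 0·ℤ^d := ℝ^d) exists and is a finite nonnegative real number. -/
open MeasureTheory ENNReal Filter Set Topology

/-- The grid `δ ℤ^d ⊆ ℝ^d`, with the convention `0 ℤ^d = ℝ^d`. -/
noncomputable def pickandsGrid (d : ℕ) (δ : ℝ) : Set (Fin d → ℝ) :=
  if δ = 0 then Set.univ else {t | ∀ i, ∃ k : ℤ, t i = δ * k}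

/-- The cube `[0,T]^d`. -/
noncomputable def pickandsCube (d : ℕ) (T : ℝ) : Set (Fin d → ℝ) :=
  Set.Icc 0 (fun _ => T)

/-- `E[ sup_{t ∈ S} Z(t) ]`, as a Lebesgue integral of the (extended-real valued)
supremum of the nonnegative field `Z` over `S`. -/
noncomputable def esupField {Ω : Type*} [MeasurableSpace Ω] (P : Measure Ω) {d : ℕ}
    (Z : (Fin d → ℝ) → Ω → ℝ) (S : Set (Fin d → ℝ)) : ℝ≥0∞ :=
  ∫⁻ ω, ⨆ t ∈ S, ENNReal.ofReal (Z t ω) ∂P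

/-!
Write `F T` for the expected supremum of `Z` over `[0,T]^d ∩ δℤ^d`. Covering `[0,T]^d` by
`⌈T/s⌉^d` translates of `[0,s]^d` and using that the expected supremum over a compact set is
invariant under translation gives the subadditivity bound `F T ≤ ⌈T/s⌉^d F s`, so that
`limsup F T / T^d ≤ F s / s^d` for every admissible scale `s`; the limit is the infimum of
`F s / s^d` over these scales, which is finite because `F` is finite.

For `δ > 0` the admissible scales are the multiples of `δ`, and `F T ≥ F (δ ⌊T/δ⌋)` gives the
matching lower bound. For `δ = 0` the supremum over a closed cell need not be measurable, so the
cells are enlarged to open boxes, over which separability makes the supremum a.e. measurable; this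
costs passing from `F s` to `F s'` with `s < s'`, and letting `s ↑ s'` recovers the bound.
-/

section Grid

variable {d : ℕ} {δ : ℝ}

theorem pickandsGrid_zero : pickandsGrid d 0 = univ := if_pos rfl

theorem pickandsGrid_eq_pi (hδ : δ ≠ 0) :
    pickandsGrid d δ = univ.pi fun _ => (AddSubgroup.zmultiples δ : Set ℝ) := by
  ext t
  simp only [pickandsGrid, hδ, if_false, mem_ofPred_eq, mem_univ_pi, SetLike.mem_coe,
    AddSubgroup.mem_zmultiples_iff, zsmul_eq_mul, mul_comm, eq_comm]

theorem countable_pickandsGrid (hδ : δ ≠ 0) : (pickandsGrid d δ).Countable := by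
  rw [pickandsGrid_eq_pi hδ]
  exact countable_univ_pi fun _ => by
    rw [← AddSubgroup.range_zmultiplesHom]
    exact countable_range _

theorem isClosed_pickandsGrid (hδ : δ ≠ 0) : IsClosed (pickandsGrid d δ) := by
  rw [pickandsGrid_eq_pi hδ]
  exact isClosed_set_pi fun _ _ => AddSubgroup.isClosed_of_discrete

theorem pickandsCube_mono {a b : ℝ} (h : a ≤ b) : pickandsCube d a ⊆ pickandsCube d b :=
  Icc_subset_Icc_right fun _ => h

theorem exists_lt_ceil_div_mul_le_le {s T x : ℝ} (hs : 0 < s) (hT : 0 < T) (hx : x ∈ Icc 0 T) :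
    ∃ q < ⌈T / s⌉₊, q * s ≤ x ∧ x ≤ q * s + s := by
  obtain ⟨hx0, hxT⟩ := hx
  have hN : 0 < ⌈T / s⌉₊ := Nat.ceil_pos.2 (div_pos hT hs)
  refine ⟨min ⌊x / s⌋₊ (⌈T / s⌉₊ - 1), by omega, ?_, ?_⟩
  · calc ((min ⌊x / s⌋₊ (⌈T / s⌉₊ - 1) : ℕ) : ℝ) * s ≤ ⌊x / s⌋₊ * s := by
          gcongr; exact min_le_left _ _
      _ ≤ x := (le_div_iff₀ hs).1 (Nat.floor_le (div_nonneg hx0 hs.le))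
  · rcases min_cases ⌊x / s⌋₊ (⌈T / s⌉₊ - 1) with ⟨h, -⟩ | ⟨h, -⟩ <;> rw [h]
    · have := Nat.lt_floor_add_one (x / s)
      rw [div_lt_iff₀ hs] at this
      linarith
    · have := Nat.le_ceil (T / s)
      rw [div_le_iff₀ hs] at this
      rw [Nat.cast_sub hN, Nat.cast_one]
      linarith

theorem exists_sub_mem_pickandsCube {s T : ℝ} (hs : 0 < s) (hT : 0 < T) {x : Fin d → ℝ}
    (hx : x ∈ pickandsCube d T) :
    ∃ j ∈ Fintype.piFinset fun _ : Fin d => Finset.range ⌈T / s⌉₊,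
      x - (fun i => (j i : ℝ) * s) ∈ pickandsCube d s := by
  choose j hjN hj using fun i => exists_lt_ceil_div_mul_le_le hs hT ⟨hx.1 i, hx.2 i⟩
  refine ⟨j, Fintype.mem_piFinset.2 fun i => Finset.mem_range.2 (hjN i),
    fun i => ?_, fun i => ?_⟩ <;> simp only [Pi.sub_apply, Pi.zero_apply] <;> linarith [hj i]

end Grid

theorem biSup_le_sum_of_subset_biUnion {α ι : Type*} (g : α → ℝ≥0∞) {S : Set α} {J : Finset ι}
    {V : ι → Set α} (hS : S ⊆ ⋃ j ∈ J, V j) :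
    ⨆ t ∈ S, g t ≤ ∑ j ∈ J, ⨆ t ∈ V j, g t := by
  refine iSup₂_le fun t ht => ?_
  obtain ⟨j, hj, htj⟩ := mem_iUnion₂.1 (hS ht)
  exact (le_biSup g htj).trans
    (Finset.single_le_sum (f := fun j => ⨆ t ∈ V j, g t) (fun _ _ => zero_le) hj)

section Measurability

variable {Ω ι : Type*} [MeasurableSpace Ω] (P : Measure Ω) (Z : ι → Ω → ℝ)

theorem measurable_biSup_ofReal (hZ : ∀ t, Measurable (Z t)) {S : Set ι} (hS : S.Countable) :
    Measurable fun ω => ⨆ t ∈ S, ENNReal.ofReal (Z t ω) :=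
  Measurable.biSup S hS fun t _ => (hZ t).ennreal_ofReal

theorem aemeasurable_biSup_ofReal_of_isOpen [TopologicalSpace ι] (hZ : ∀ t, Measurable (Z t))
    {D₀ : Set ι} (hD₀ : D₀.Countable)
    (hsep : ∀ᵐ ω ∂P, ∀ U : Set ι, IsOpen U →
      (⨆ t ∈ U ∩ D₀, ENNReal.ofReal (Z t ω)) = ⨆ t ∈ U, ENNReal.ofReal (Z t ω))
    {U : Set ι} (hU : IsOpen U) :
    AEMeasurable (fun ω => ⨆ t ∈ U, ENNReal.ofReal (Z t ω)) P :=
  ⟨_, measurable_biSup_ofReal Z hZ (hD₀.mono inter_subset_right),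
    by filter_upwards [hsep] with ω hω using (hω U hU).symm⟩

end Measurability

section ExpectedSupremum

variable {Ω : Type*} [MeasurableSpace Ω] {d : ℕ}

/-- Assumption (shi) of the paper. -/
def SupShiftInvariant (P : Measure Ω) (Z : (Fin d → ℝ) → Ω → ℝ) : Prop :=
  ∀ K : Set (Fin d → ℝ), IsCompact K → ∀ c : Fin d → ℝ,
    esupField P (fun t ω => Z (t + c) ω) K = esupField P Z K

variable {P : Measure Ω} {Z : (Fin d → ℝ) → Ω → ℝ}

theorem esupField_mono {S S' : Set (Fin d → ℝ)} (h : S ⊆ S') :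
    esupField P Z S ≤ esupField P Z S' :=
  lintegral_mono fun _ => biSup_mono h

theorem esupField_image_add_const (K : Set (Fin d → ℝ)) (c : Fin d → ℝ) :
    esupField P Z ((· + c) '' K) = esupField P (fun t ω => Z (t + c) ω) K := by
  simp only [esupField, iSup_image]

theorem esupField_le_card_mul {ι : Type*} {A K : Set (Fin d → ℝ)} {J : Finset ι}
    {V : ι → Set (Fin d → ℝ)} {c : ι → Fin d → ℝ} (hshi : SupShiftInvariant P Z)
    (hK : IsCompact K) (hA : A ⊆ ⋃ j ∈ J, V j)
    (hV : ∀ j ∈ J, AEMeasurable (fun ω => ⨆ t ∈ V j, ENNReal.ofReal (Z t ω)) P)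
    (hVK : ∀ j ∈ J, V j ⊆ (· + c j) '' K) :
    esupField P Z A ≤ J.card * esupField P Z K :=
  calc esupField P Z A
      ≤ ∫⁻ ω, ∑ j ∈ J, ⨆ t ∈ V j, ENNReal.ofReal (Z t ω) ∂P :=
        lintegral_mono fun _ => biSup_le_sum_of_subset_biUnion _ hA
    _ = ∑ j ∈ J, esupField P Z (V j) := lintegral_finsetSum' J hV
    _ ≤ ∑ _j ∈ J, esupField P Z K := Finset.sum_le_sum fun j hj =>
        (esupField_mono (hVK j hj)).trans_eq
          ((esupField_image_add_const K (c j)).trans (hshi K hK (c j)))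
    _ = J.card * esupField P Z K := by rw [Finset.sum_const, nsmul_eq_mul]

theorem card_piFinset_range (d N : ℕ) :
    ((Fintype.piFinset fun _ : Fin d => Finset.range N).card : ℝ≥0∞) = (N : ℝ≥0∞) ^ d := by
  simp

theorem esupField_cube_inter_grid_le (hZ : ∀ t, Measurable (Z t))
    (hshi : SupShiftInvariant P Z) {δ : ℝ} (hδ : 0 < δ) {m : ℕ} (hm : 0 < m) {T : ℝ}
    (hT : 0 < T) :
    esupField P Z (pickandsCube d T ∩ pickandsGrid d δ) ≤
      (⌈T / (δ * m)⌉₊ : ℝ≥0∞) ^ d * esupField P Z (pickandsCube d (δ * m) ∩ pickandsGrid d δ) := by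
  set s := δ * m
  have hs : 0 < s := by positivity
  set K := pickandsCube d s ∩ pickandsGrid d δ
  have hK : IsCompact K := isCompact_Icc.inter_right (isClosed_pickandsGrid hδ.ne')
  rw [← card_piFinset_range]
  refine esupField_le_card_mul (c := fun j i => (j i : ℝ) * s) hshi hK ?_
    (fun j _ => (measurable_biSup_ofReal Z hZ
      (((countable_pickandsGrid hδ.ne').mono inter_subset_right).image _)).aemeasurable)
    (fun _ _ => subset_rfl)
  rintro x ⟨hxT, hxδ⟩
  obtain ⟨j, hj, hxj⟩ := exists_sub_mem_pickandsCube hs hT hxT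
  refine mem_biUnion hj ⟨_, ⟨hxj, ?_⟩, sub_add_cancel x _⟩
  rw [pickandsGrid_eq_pi hδ.ne'] at hxδ ⊢
  refine fun i _ => sub_mem (hxδ i trivial) (AddSubgroup.mem_zmultiples_iff.2 ⟨j i * m, ?_⟩)
  simp only [s, zsmul_eq_mul]
  push_cast
  ring

theorem esupField_cube_le (hshi : SupShiftInvariant P Z)
    (hU : ∀ U, IsOpen U → AEMeasurable (fun ω => ⨆ t ∈ U, ENNReal.ofReal (Z t ω)) P)
    {s s' T : ℝ} (hs : 0 < s) (hss' : s < s') (hT : 0 < T) :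
    esupField P Z (pickandsCube d T) ≤
      (⌈T / s⌉₊ : ℝ≥0∞) ^ d * esupField P Z (pickandsCube d s') := by
  set ε := (s' - s) / 2
  have hε : 0 < ε := by simp only [ε]; linarith
  have hs' : s + 2 * ε = s' := by simp only [ε]; ring
  set c : (Fin d → ℕ) → Fin d → ℝ := fun j i => (j i : ℝ) * s
  set box : Set (Fin d → ℝ) := univ.pi fun _ => Ioo (-ε) (s + ε)
  rw [← card_piFinset_range]
  refine esupField_le_card_mul (V := fun j => (· - c j) ⁻¹' box)
    (c := fun j => c j - fun _ => ε) hshi isCompact_Icc ?_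
    (fun j _ => hU _ ((isOpen_set_pi finite_univ fun _ _ => isOpen_Ioo).preimage
      (continuous_sub_right (c j))))
    (fun j _ x hx => ⟨x - (c j - fun _ => ε), ⟨fun i => ?_, fun i => ?_⟩, sub_add_cancel x _⟩)
  · intro x hxT
    obtain ⟨j, hj, hxj⟩ := exists_sub_mem_pickandsCube hs hT hxT
    refine mem_biUnion hj fun i _ => ?_
    have h0 := hxj.1 i
    have h1 := hxj.2 i
    simp only [Pi.sub_apply, Pi.zero_apply] at h0 h1
    simp only [c, mem_Ioo, Pi.sub_apply]
    constructor <;> linarith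
  all_goals
    have := hx i trivial
    simp only [Pi.sub_apply, Pi.zero_apply, mem_Ioo] at this ⊢
    linarith

end ExpectedSupremum

section Limits

variable {f : ℝ → ℝ≥0∞} {d : ℕ}

theorem limsup_div_pow_le {s : ℝ} {C : ℝ≥0∞} (hs : 0 < s)
    (h : ∀ T > 0, f T ≤ (⌈T / s⌉₊ : ℝ≥0∞) ^ d * C) :
    limsup (fun T => f T / ENNReal.ofReal (T ^ d)) atTop ≤ C / ENNReal.ofReal (s ^ d) := by
  have hceil : Tendsto (fun T : ℝ => (⌈T / s⌉₊ : ℝ) / T) atTop (𝓝 s⁻¹) := by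
    simpa only [inv_mul_eq_div] using tendsto_nat_ceil_mul_div_atTop (inv_nonneg.2 hs.le)
  have hlim : Tendsto (fun T : ℝ => ENNReal.ofReal (((⌈T / s⌉₊ : ℝ) / T) ^ d) * C) atTop
      (𝓝 (ENNReal.ofReal (s⁻¹ ^ d) * C)) :=
    ENNReal.Tendsto.mul_const ((ENNReal.continuous_ofReal.tendsto _).comp (hceil.pow d))
      (Or.inl (ENNReal.ofReal_pos.2 (by positivity)).ne')
  calc limsup (fun T => f T / ENNReal.ofReal (T ^ d)) atTop
      ≤ limsup (fun T : ℝ => ENNReal.ofReal (((⌈T / s⌉₊ : ℝ) / T) ^ d) * C) atTop := by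
        refine limsup_le_limsup ?_
        filter_upwards [eventually_gt_atTop 0] with T hT
        rw [div_pow, ENNReal.ofReal_div_of_pos (by positivity),
          ENNReal.ofReal_pow (Nat.cast_nonneg _), ofReal_natCast, div_eq_mul_inv,
          div_eq_mul_inv, mul_right_comm]
        gcongr
        exact h T hT
    _ = C / ENNReal.ofReal (s ^ d) := by
        rw [hlim.limsup_eq, inv_pow, ENNReal.ofReal_inv_of_pos (by positivity), mul_comm,
          div_eq_mul_inv]

theorem le_liminf_div_pow_of_floor {δ : ℝ} {H : ℝ≥0∞} (hδ : 0 < δ)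
    (h : ∀ T ≥ δ, H * ENNReal.ofReal ((δ * ⌊T / δ⌋₊) ^ d) ≤ f T) :
    H ≤ liminf (fun T => f T / ENNReal.ofReal (T ^ d)) atTop := by
  have hfloor : Tendsto (fun T : ℝ => δ * ((⌊T / δ⌋₊ : ℝ) / T)) atTop (𝓝 1) := by
    have := (tendsto_nat_floor_mul_div_atTop (inv_nonneg.2 hδ.le)).const_mul δ
    simpa only [inv_mul_eq_div, mul_inv_cancel₀ hδ.ne'] using this
  have hlim : Tendsto (fun T : ℝ => H * ENNReal.ofReal ((δ * ((⌊T / δ⌋₊ : ℝ) / T)) ^ d)) atTop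
      (𝓝 H) := by
    simpa using ENNReal.Tendsto.const_mul
      ((ENNReal.continuous_ofReal.tendsto _).comp (hfloor.pow d)) (Or.inl (by simp))
  calc H = liminf (fun T : ℝ => H * ENNReal.ofReal ((δ * ((⌊T / δ⌋₊ : ℝ) / T)) ^ d)) atTop :=
        hlim.liminf_eq.symm
    _ ≤ liminf (fun T => f T / ENNReal.ofReal (T ^ d)) atTop := by
        refine liminf_le_liminf ?_
        filter_upwards [eventually_ge_atTop δ] with T hT
        have hT0 : 0 < T := hδ.trans_le hT
        rw [← mul_div_assoc, div_pow, ENNReal.ofReal_div_of_pos (by positivity), ← mul_div_assoc]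
        exact ENNReal.div_le_div_right (h T hT) _

theorem le_div_pow_of_forall_lt {a C : ℝ≥0∞} {s' : ℝ} (hs' : 0 < s')
    (h : ∀ s ∈ Ioo 0 s', a ≤ C / ENNReal.ofReal (s ^ d)) :
    a ≤ C / ENNReal.ofReal (s' ^ d) := by
  have hpow : Tendsto (fun s : ℝ => ENNReal.ofReal (s ^ d)) (𝓝[<] s')
      (𝓝 (ENNReal.ofReal (s' ^ d))) :=
    ((ENNReal.continuous_ofReal.comp (continuous_pow d)).tendsto s').mono_left nhdsWithin_le_nhds
  have hdiv : Tendsto (fun s : ℝ => C / ENNReal.ofReal (s ^ d)) (𝓝[<] s')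
      (𝓝 (C / ENNReal.ofReal (s' ^ d))) := by
    simpa only [div_eq_mul_inv] using
      ENNReal.Tendsto.const_mul (tendsto_inv_iff.2 hpow) (Or.inl (by simp))
  exact ge_of_tendsto hdiv (mem_of_superset (Ioo_mem_nhdsLT hs') h)

end Limits

section PickandsLimit

variable {Ω : Type*} [MeasurableSpace Ω] {P : Measure Ω} {d : ℕ} {Z : (Fin d → ℝ) → Ω → ℝ}

theorem tendsto_esupField_cube_div_pow (hshi : SupShiftInvariant P Z)
    (hU : ∀ U, IsOpen U → AEMeasurable (fun ω => ⨆ t ∈ U, ENNReal.ofReal (Z t ω)) P) :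
    Tendsto (fun T => esupField P Z (pickandsCube d T) / ENNReal.ofReal (T ^ d)) atTop
      (𝓝 (⨅ s > 0, esupField P Z (pickandsCube d s) / ENNReal.ofReal (s ^ d))) := by
  refine tendsto_of_le_liminf_of_limsup_le ?_ ?_
  · refine le_liminf_of_le (by isBoundedDefault) ?_
    filter_upwards [eventually_gt_atTop 0] with T hT using iInf₂_le T hT
  · exact le_iInf₂ fun s' hs' => le_div_pow_of_forall_lt hs' fun s hs =>
      limsup_div_pow_le hs.1 fun T hT => esupField_cube_le hshi hU hs.1 hs.2 hT

theorem tendsto_esupField_cube_inter_grid_div_pow (hZ : ∀ t, Measurable (Z t))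
    (hshi : SupShiftInvariant P Z) {δ : ℝ} (hδ : 0 < δ) :
    Tendsto (fun T => esupField P Z (pickandsCube d T ∩ pickandsGrid d δ) / ENNReal.ofReal (T ^ d))
      atTop (𝓝 (⨅ (m : ℕ) (_ : 0 < m), esupField P Z (pickandsCube d (δ * m) ∩ pickandsGrid d δ) /
        ENNReal.ofReal ((δ * m) ^ d))) := by
  refine tendsto_of_le_liminf_of_limsup_le ?_ ?_
  · refine le_liminf_div_pow_of_floor hδ fun T hT => ?_
    have hn : 0 < ⌊T / δ⌋₊ := Nat.floor_pos.2 ((one_le_div hδ).2 hT)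
    have hnT : δ * ⌊T / δ⌋₊ ≤ T :=
      (le_div_iff₀' hδ).1 (Nat.floor_le (div_nonneg (hδ.le.trans hT) hδ.le))
    calc _ ≤ esupField P Z (pickandsCube d (δ * ⌊T / δ⌋₊) ∩ pickandsGrid d δ) :=
          ENNReal.mul_le_of_le_div (iInf₂_le (⌊T / δ⌋₊) hn)
      _ ≤ _ := esupField_mono (inter_subset_inter_left _ (pickandsCube_mono hnT))
  · exact le_iInf₂ fun m hm => limsup_div_pow_le (by positivity) fun T hT =>
      esupField_cube_inter_grid_le hZ hshi hδ hm hT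

end PickandsLimit

theorem pickands_constant_exists_general
    {Ω : Type*} [MeasurableSpace Ω] (P : Measure Ω)
    (d : ℕ) (Z : (Fin d → ℝ) → Ω → ℝ)
    (hjm : Measurable (Function.uncurry Z))
    (hsep : ∃ D₀ : Set (Fin d → ℝ), D₀.Countable ∧ Dense D₀ ∧
      ∀ᵐ ω ∂P, ∀ U : Set (Fin d → ℝ), IsOpen U →
        (⨆ t ∈ U ∩ D₀, ENNReal.ofReal (Z t ω)) = ⨆ t ∈ U, ENNReal.ofReal (Z t ω))
    (hnorm : ∀ T > (0 : ℝ),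
      0 < esupField P Z (pickandsCube d T) ∧ esupField P Z (pickandsCube d T) < ⊤)
    (hshi : ∀ K : Set (Fin d → ℝ), IsCompact K → ∀ c : Fin d → ℝ,
      esupField P (fun t ω => Z (t + c) ω) K = esupField P Z K) :
    ∀ δ ≥ (0 : ℝ), ∃ H : ℝ≥0∞, H ≠ ⊤ ∧
      Tendsto (fun T : ℝ =>
          esupField P Z (pickandsCube d T ∩ pickandsGrid d δ) / ENNReal.ofReal (T ^ d))
        atTop (𝓝 H) := by
  obtain ⟨D₀, hD₀, -, hae⟩ := hsep
  have hZ : ∀ t, Measurable (Z t) := fun t => hjm.comp measurable_prodMk_left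
  intro δ hδ
  rcases hδ.eq_or_lt with rfl | hδ
  · simp only [pickandsGrid_zero, inter_univ]
    refine ⟨_, ne_top_of_le_ne_top ?_ (iInf₂_le 1 one_pos),
      tendsto_esupField_cube_div_pow hshi fun U hU =>
        aemeasurable_biSup_ofReal_of_isOpen P Z hZ hD₀ hae hU⟩
    simpa using (hnorm 1 one_pos).2.ne
  · refine ⟨_, ne_top_of_le_ne_top ?_ (iInf₂_le 1 one_pos),
      tendsto_esupField_cube_inter_grid_div_pow hZ hshi hδ⟩
    have hfin := (hnorm δ hδ).2
    refine (ENNReal.div_lt_top ?_ (ENNReal.ofReal_pos.2 (by positivity)).ne').ne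
    simpa using ne_top_of_le_ne_top hfin.ne (esupField_mono inter_subset_left)

/-- under the standing assumptions, for every `δ ≥ 0` the limit
`H_Z^δ = lim_{T→∞} T^{-d} E[ sup_{t ∈ [0,T]^d ∩ δℤ^d} Z(t) ]` exists and is a finite
nonnegative number. -/
theorem pickands_constant_exists
    {Ω : Type*} [MeasurableSpace Ω] (P : Measure Ω) [IsProbabilityMeasure P]
    (d : ℕ) (hd : 0 < d) (Z : (Fin d → ℝ) → Ω → ℝ)
    (hjm : Measurable (Function.uncurry Z))
    (hnn : ∀ t ω, 0 ≤ Z t ω)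
    (hsep : ∃ D₀ : Set (Fin d → ℝ), D₀.Countable ∧ Dense D₀ ∧
      ∀ᵐ ω ∂P, ∀ U : Set (Fin d → ℝ), IsOpen U →
        (⨆ t ∈ U ∩ D₀, ENNReal.ofReal (Z t ω)) = ⨆ t ∈ U, ENNReal.ofReal (Z t ω))
    (hsc : ∀ t : Fin d → ℝ, ∀ ε > (0 : ℝ),
      Tendsto (fun s => P {ω | ε ≤ |Z s ω - Z t ω|}) (𝓝 t) (𝓝 0))
    (hMS : ∀ t : Fin d → ℝ, ∫⁻ ω, ENNReal.ofReal (Z t ω) ∂P = 1)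
    (hnorm : ∀ T > (0 : ℝ),
      0 < esupField P Z (pickandsCube d T) ∧ esupField P Z (pickandsCube d T) < ⊤)
    (hshi : ∀ K : Set (Fin d → ℝ), IsCompact K → ∀ c : Fin d → ℝ,
      esupField P (fun t ω => Z (t + c) ω) K = esupField P Z K) :
    ∀ δ ≥ (0 : ℝ), ∃ H : ℝ≥0∞, H ≠ ⊤ ∧
      Tendsto (fun T : ℝ =>
          esupField P Z (pickandsCube d T ∩ pickandsGrid d δ) / ENNReal.ofReal (T ^ d))
        atTop (𝓝 H) :=
  pickands_constant_exists_general P d Z hjm hsep hnorm hshi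
end

section
/- Fix δ ∈ (0,1/2) and set a_δ = ⌊1/δ⌋δ. Then for every n ∈ ℕ, E[ sup_{t∈[0,n a_δ]} Z(t) ] − E[ max_{t∈[0,n a_δ]∩δℤ} Z(t) ] ≤ n · ( E[ sup_{t∈[0,a_δ]} Z(t) ] − E[ max_{t∈[0,a_δ]∩δℤ} Z(t) ] ). -/
open MeasureTheory ENNReal Filter Set Topology

/-- The grid `δ ℤ ⊆ ℝ`, with the convention `0 ℤ = ℝ`. -/
noncomputable def pickandsGrid1 (δ : ℝ) : Set ℝ :=
  if δ = 0 then Set.univ else {t | ∃ k : ℤ, t = δ * k}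

/-- `E[ sup_{t ∈ S} Z(t) ]`. -/
noncomputable def esupField1 {Ω : Type*} [MeasurableSpace Ω] (P : Measure Ω)
    (Z : ℝ → Ω → ℝ) (S : Set ℝ) : ℝ≥0∞ :=
  ∫⁻ ω, ⨆ t ∈ S, ENNReal.ofReal (Z t ω) ∂P

/-- Core pointwise inequality in `ℝ≥0∞`. -/
private lemma pickands_core {a b c d : ℝ≥0∞} (hca : c ≤ a) (hdb : d ≤ b) :
    a ⊔ b + c + d ≤ a + b + (c ⊔ d) := by
  rcases le_total a b with h | h
  · rw [sup_eq_right.mpr h]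
    calc b + c + d ≤ b + a + (c ⊔ d) := add_le_add (add_le_add le_rfl hca) le_sup_right
      _ = a + b + (c ⊔ d) := by rw [add_comm b a]
  · rw [sup_eq_left.mpr h]
    calc a + c + d ≤ a + (c ⊔ d) + b := add_le_add (add_le_add le_rfl le_sup_left) hdb
      _ = a + b + (c ⊔ d) := add_right_comm _ _ _

private lemma pickands_toReal_add3 {u v w : ℝ≥0∞} (hu : u ≠ ⊤) (hv : v ≠ ⊤) (hw : w ≠ ⊤) :
    (u + v + w).toReal = u.toReal + v.toReal + w.toReal := by
  rw [ENNReal.toReal_add (ENNReal.add_ne_top.mpr ⟨hu, hv⟩) hw, ENNReal.toReal_add hu hv]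

/-- for `δ ∈ (0,1/2)` and `a_δ = ⌊1/δ⌋δ`, for every `n ∈ ℕ`,
`E[sup_{[0,n a_δ]} Z] − E[max_{[0,n a_δ] ∩ δℤ} Z] ≤
  n (E[sup_{[0,a_δ]} Z] − E[max_{[0,a_δ] ∩ δℤ} Z])`. -/
theorem pickands_discretisation_error_bound
    {Ω : Type*} [MeasurableSpace Ω] (P : Measure Ω) [IsProbabilityMeasure P]
    (Z : ℝ → Ω → ℝ)
    (hjm : Measurable (Function.uncurry Z))
    (hnn : ∀ t ω, 0 ≤ Z t ω)
    (hsep : ∃ D₀ : Set ℝ, D₀.Countable ∧ Dense D₀ ∧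
      ∀ᵐ ω ∂P, ∀ U : Set ℝ, IsOpen U →
        (⨆ t ∈ U ∩ D₀, ENNReal.ofReal (Z t ω)) = ⨆ t ∈ U, ENNReal.ofReal (Z t ω))
    (hnorm : ∀ T > (0 : ℝ),
      0 < esupField1 P Z (Set.Icc 0 T) ∧ esupField1 P Z (Set.Icc 0 T) < ⊤)
    (hshi : ∀ K : Set ℝ, IsCompact K → ∀ c : ℝ,
      esupField1 P (fun t ω => Z (t + c) ω) K = esupField1 P Z K)
    (δ : ℝ) (hδ0 : 0 < δ) (hδh : δ < 1 / 2) :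
    ∀ n : ℕ,
      (esupField1 P Z (Set.Icc 0 (n * ((⌊1 / δ⌋ : ℝ) * δ)))).toReal -
          (esupField1 P Z (Set.Icc 0 (n * ((⌊1 / δ⌋ : ℝ) * δ)) ∩ pickandsGrid1 δ)).toReal ≤
        n * ((esupField1 P Z (Set.Icc 0 ((⌊1 / δ⌋ : ℝ) * δ))).toReal -
          (esupField1 P Z (Set.Icc 0 ((⌊1 / δ⌋ : ℝ) * δ) ∩ pickandsGrid1 δ)).toReal) := by
  obtain ⟨D₀, hD₀c, -, haesep⟩ := hsep
  set a : ℝ := (⌊1 / δ⌋ : ℝ) * δ with ha_def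
  have hδne : δ ≠ 0 := hδ0.ne'
  have hfl : (1 : ℤ) ≤ ⌊1 / δ⌋ := by
    rw [Int.le_floor]
    push_cast
    rw [le_div_iff₀ hδ0]
    linarith
  have hfl' : (1 : ℝ) ≤ (⌊1 / δ⌋ : ℝ) := by exact_mod_cast hfl
  have ha : 0 < a := by
    rw [ha_def]; nlinarith
  -- grid facts
  have hgrid_eq : pickandsGrid1 δ = {t : ℝ | ∃ k : ℤ, t = δ * k} := if_neg hδne
  have hgc : (pickandsGrid1 δ).Countable := by
    rw [hgrid_eq]
    exact (Set.countable_range fun k : ℤ => δ * (k : ℝ)).mono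
      (fun t ht => by obtain ⟨k, hk⟩ := ht; exact ⟨k, hk.symm⟩)
  -- basic measurability
  have hZt : ∀ t : ℝ, Measurable fun ω => ENNReal.ofReal (Z t ω) := fun t =>
    (hjm.comp measurable_prodMk_left).ennreal_ofReal
  have hmc : ∀ S : Set ℝ, S.Countable →
      Measurable fun ω => ⨆ t ∈ S, ENNReal.ofReal (Z t ω) := by
    intro S hS
    haveI := hS.to_subtype
    have hrw : (fun ω => ⨆ t ∈ S, ENNReal.ofReal (Z t ω))
        = fun ω => ⨆ t : S, ENNReal.ofReal (Z (t : ℝ) ω) := by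
      funext ω
      exact (iSup_subtype'' S fun t => ENNReal.ofReal (Z t ω)).symm
    rw [hrw]
    exact Measurable.iSup fun t => hZt (t : ℝ)
  have haem : ∀ l r : ℝ,
      AEMeasurable (fun ω => ⨆ t ∈ Icc l r, ENNReal.ofReal (Z t ω)) P := by
    intro l r
    rcases le_or_gt l r with hlr | hlr
    · have hIcc : Icc l r = insert l (insert r (Ioo l r)) := by
        ext x
        simp only [mem_Icc, mem_insert_iff, mem_Ioo]
        constructor
        · rintro ⟨h1, h2⟩
          rcases h1.eq_or_lt with h | h
          · exact Or.inl h.symm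
          rcases h2.eq_or_lt with h' | h'
          · exact Or.inr (Or.inl h')
          · exact Or.inr (Or.inr ⟨h, h'⟩)
        · rintro (rfl | rfl | ⟨h1, h2⟩)
          · exact ⟨le_rfl, hlr⟩
          · exact ⟨hlr, le_rfl⟩
          · exact ⟨h1.le, h2.le⟩
      refine ⟨fun ω => ENNReal.ofReal (Z l ω) ⊔ (ENNReal.ofReal (Z r ω) ⊔
          ⨆ t ∈ Ioo l r ∩ D₀, ENNReal.ofReal (Z t ω)), ?_, ?_⟩
      · exact (hZt l).sup ((hZt r).sup (hmc _ (hD₀c.mono inter_subset_right)))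
      · filter_upwards [haesep] with ω hω
        rw [hIcc, iSup_insert, iSup_insert, hω (Ioo l r) isOpen_Ioo]
    · have hempty : Icc l r = ∅ := Icc_eq_empty hlr.not_ge
      simp only [hempty, mem_empty_iff_false, iSup_false, iSup_bot]
      exact aemeasurable_const
  -- monotonicity of esupField1
  have hmono : ∀ {S T : Set ℝ}, S ⊆ T → esupField1 P Z S ≤ esupField1 P Z T := by
    intro S T h
    exact lintegral_mono fun ω => iSup_le_iSup_of_subset h
  -- grid translation invariance
  have hgrid_add : ∀ n : ℕ,
      (fun t => t + (n : ℝ) * a) '' pickandsGrid1 δ = pickandsGrid1 δ := by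
    intro n
    have hca : ((n : ℝ) * a) = δ * (((n : ℤ) * ⌊1 / δ⌋ : ℤ) : ℝ) := by
      rw [ha_def]; push_cast; ring
    rw [hgrid_eq]
    ext x
    simp only [mem_image, mem_setOf_eq]
    constructor
    · rintro ⟨y, ⟨k, rfl⟩, rfl⟩
      exact ⟨k + (n : ℤ) * ⌊1 / δ⌋, by rw [hca]; push_cast; ring⟩
    · rintro ⟨k, rfl⟩
      exact ⟨δ * ((k - (n : ℤ) * ⌊1 / δ⌋ : ℤ) : ℝ), ⟨k - (n : ℤ) * ⌊1 / δ⌋, rfl⟩,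
        by rw [hca]; push_cast; ring⟩
  -- finiteness of the grid piece of [0,a]
  have hfin : (Icc 0 a ∩ pickandsGrid1 δ).Finite := by
    refine ((Set.finite_Icc (0 : ℤ) ⌊1 / δ⌋).image fun k : ℤ => δ * (k : ℝ)).subset ?_
    rintro x ⟨⟨hx0, hxa⟩, hg⟩
    rw [hgrid_eq] at hg
    obtain ⟨k, rfl⟩ := hg
    have hk0 : (0 : ℝ) ≤ (k : ℝ) :=
      le_of_mul_le_mul_left (by linarith : δ * 0 ≤ δ * (k : ℝ)) hδ0
    have hk1 : (k : ℝ) ≤ (⌊1 / δ⌋ : ℝ) := by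
      refine le_of_mul_le_mul_left ?_ hδ0
      rw [ha_def] at hxa; linarith
    refine ⟨k, ?_, rfl⟩
    rw [mem_Icc]
    exact ⟨by exact_mod_cast hk0, by exact_mod_cast hk1⟩
  -- shift invariance of the two relevant expectations
  have hshiftIcc : ∀ n : ℕ,
      esupField1 P Z (Icc ((n : ℝ) * a) ((n : ℝ) * a + a)) = esupField1 P Z (Icc 0 a) := by
    intro n
    rw [← hshi (Icc 0 a) isCompact_Icc ((n : ℝ) * a)]
    unfold esupField1
    refine lintegral_congr fun ω => ?_
    have him : Icc ((n : ℝ) * a) ((n : ℝ) * a + a)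
        = (fun t => t + (n : ℝ) * a) '' Icc 0 a := by
      rw [Set.image_add_const_Icc, zero_add, add_comm a ((n : ℝ) * a)]
    rw [him, iSup_image]
  have hshiftGrid : ∀ n : ℕ,
      esupField1 P Z (Icc ((n : ℝ) * a) ((n : ℝ) * a + a) ∩ pickandsGrid1 δ)
        = esupField1 P Z (Icc 0 a ∩ pickandsGrid1 δ) := by
    intro n
    rw [← hshi (Icc 0 a ∩ pickandsGrid1 δ) hfin.isCompact ((n : ℝ) * a)]
    unfold esupField1
    refine lintegral_congr fun ω => ?_
    have him : Icc ((n : ℝ) * a) ((n : ℝ) * a + a) ∩ pickandsGrid1 δ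
        = (fun t => t + (n : ℝ) * a) '' (Icc 0 a ∩ pickandsGrid1 δ) := by
      rw [Set.image_inter (add_left_injective ((n : ℝ) * a)), Set.image_add_const_Icc,
        zero_add, add_comm a ((n : ℝ) * a), hgrid_add n]
    rw [him, iSup_image]
  -- the induction
  intro n
  induction n with
  | zero =>
    have h0 : ((0 : ℕ) : ℝ) * a = 0 := by norm_num
    rw [h0]
    have hsing : Icc (0 : ℝ) 0 ∩ pickandsGrid1 δ = Icc (0 : ℝ) 0 := by
      rw [Set.Icc_self]
      refine inter_eq_left.mpr (singleton_subset_iff.mpr ?_)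
      rw [hgrid_eq]
      exact ⟨0, by simp⟩
    rw [hsing]
    simp
  | succ n ih =>
    have hc0 : (0 : ℝ) ≤ (n : ℝ) * a := by positivity
    have hABu : Icc (0 : ℝ) ((n : ℝ) * a) ∪ Icc ((n : ℝ) * a) ((n : ℝ) * a + a)
        = Icc (0 : ℝ) ((n : ℝ) * a + a) := Icc_union_Icc_eq_Icc hc0 (by linarith)
    have hcast : ((n + 1 : ℕ) : ℝ) * a = (n : ℝ) * a + a := by push_cast; ring
    rw [hcast]
    have hcast2 : ((n + 1 : ℕ) : ℝ) = (n : ℝ) + 1 := by push_cast; ring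
    rw [hcast2]
    -- measurability of grid sups
    have hms : ∀ S : Set ℝ,
        Measurable fun ω => ⨆ t ∈ S ∩ pickandsGrid1 δ, ENNReal.ofReal (Z t ω) :=
      fun S => hmc _ (hgc.mono inter_subset_right)
    -- the key ENNReal inequality
    have key : esupField1 P Z (Icc 0 ((n : ℝ) * a + a))
        + esupField1 P Z (Icc (0 : ℝ) ((n : ℝ) * a) ∩ pickandsGrid1 δ)
        + esupField1 P Z (Icc ((n : ℝ) * a) ((n : ℝ) * a + a) ∩ pickandsGrid1 δ)
        ≤ esupField1 P Z (Icc (0 : ℝ) ((n : ℝ) * a))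
        + esupField1 P Z (Icc ((n : ℝ) * a) ((n : ℝ) * a + a))
        + esupField1 P Z (Icc 0 ((n : ℝ) * a + a) ∩ pickandsGrid1 δ) := by
      unfold esupField1
      rw [← lintegral_add_right' _ (hms (Icc (0 : ℝ) ((n : ℝ) * a))).aemeasurable,
        ← lintegral_add_right' _ (hms (Icc ((n : ℝ) * a) ((n : ℝ) * a + a))).aemeasurable,
        ← lintegral_add_right' _ (haem ((n : ℝ) * a) ((n : ℝ) * a + a)),
        ← lintegral_add_right' _ (hms (Icc 0 ((n : ℝ) * a + a))).aemeasurable]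
      refine lintegral_mono fun ω => ?_
      have hu : (⨆ t ∈ Icc 0 ((n : ℝ) * a + a), ENNReal.ofReal (Z t ω))
          = (⨆ t ∈ Icc (0 : ℝ) ((n : ℝ) * a), ENNReal.ofReal (Z t ω))
            ⊔ ⨆ t ∈ Icc ((n : ℝ) * a) ((n : ℝ) * a + a), ENNReal.ofReal (Z t ω) := by
        rw [← hABu, iSup_union]
      have hg : (⨆ t ∈ Icc 0 ((n : ℝ) * a + a) ∩ pickandsGrid1 δ, ENNReal.ofReal (Z t ω))
          = (⨆ t ∈ Icc (0 : ℝ) ((n : ℝ) * a) ∩ pickandsGrid1 δ, ENNReal.ofReal (Z t ω))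
            ⊔ ⨆ t ∈ Icc ((n : ℝ) * a) ((n : ℝ) * a + a) ∩ pickandsGrid1 δ,
                ENNReal.ofReal (Z t ω) := by
        rw [← hABu, union_inter_distrib_right, iSup_union]
      rw [hu, hg]
      exact pickands_core (iSup_le_iSup_of_subset inter_subset_left)
        (iSup_le_iSup_of_subset inter_subset_left)
    -- finiteness of all six quantities
    have hT : esupField1 P Z (Icc 0 ((n : ℝ) * a + a)) ≠ ⊤ :=
      (hnorm _ (by linarith)).2.ne
    have hsubA : Icc (0 : ℝ) ((n : ℝ) * a) ⊆ Icc (0 : ℝ) ((n : ℝ) * a + a) := by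
      rw [← hABu]; exact subset_union_left
    have hsubB : Icc ((n : ℝ) * a) ((n : ℝ) * a + a) ⊆ Icc (0 : ℝ) ((n : ℝ) * a + a) := by
      rw [← hABu]; exact subset_union_right
    have hxA : esupField1 P Z (Icc (0 : ℝ) ((n : ℝ) * a)) ≠ ⊤ :=
      (lt_of_le_of_lt (hmono hsubA) hT.lt_top).ne
    have hxB : esupField1 P Z (Icc ((n : ℝ) * a) ((n : ℝ) * a + a)) ≠ ⊤ :=
      (lt_of_le_of_lt (hmono hsubB) hT.lt_top).ne
    have hyA : esupField1 P Z (Icc (0 : ℝ) ((n : ℝ) * a) ∩ pickandsGrid1 δ) ≠ ⊤ :=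
      (lt_of_le_of_lt (hmono (inter_subset_left.trans hsubA)) hT.lt_top).ne
    have hyB : esupField1 P Z (Icc ((n : ℝ) * a) ((n : ℝ) * a + a) ∩ pickandsGrid1 δ) ≠ ⊤ :=
      (lt_of_le_of_lt (hmono (inter_subset_left.trans hsubB)) hT.lt_top).ne
    have hY : esupField1 P Z (Icc 0 ((n : ℝ) * a + a) ∩ pickandsGrid1 δ) ≠ ⊤ :=
      (lt_of_le_of_lt (hmono inter_subset_left) hT.lt_top).ne
    -- convert the key inequality to reals
    have hreal : (esupField1 P Z (Icc 0 ((n : ℝ) * a + a))).toReal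
        + (esupField1 P Z (Icc (0 : ℝ) ((n : ℝ) * a) ∩ pickandsGrid1 δ)).toReal
        + (esupField1 P Z (Icc ((n : ℝ) * a) ((n : ℝ) * a + a) ∩ pickandsGrid1 δ)).toReal
        ≤ (esupField1 P Z (Icc (0 : ℝ) ((n : ℝ) * a))).toReal
        + (esupField1 P Z (Icc ((n : ℝ) * a) ((n : ℝ) * a + a))).toReal
        + (esupField1 P Z (Icc 0 ((n : ℝ) * a + a) ∩ pickandsGrid1 δ)).toReal := by
      have h1 := ENNReal.toReal_mono
        (by
          exact ENNReal.add_ne_top.mpr ⟨ENNReal.add_ne_top.mpr ⟨hxA, hxB⟩, hY⟩) key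
      rwa [pickands_toReal_add3 hT hyA hyB, pickands_toReal_add3 hxA hxB hY] at h1
    rw [hshiftIcc n, hshiftGrid n] at hreal
    linarith [ih]
end

section
/- With a_δ = ⌊1/δ⌋δ for δ ∈ (0,1/2), the discrete maxima converge to the continuous supremum: max_{t∈[0,a_δ]∩δℤ} Z(t) → sup_{t∈[0,1]} Z(t) in probability as δ ↓ 0, and consequently lim_{δ↓0} E[ max_{t∈[0,a_δ]∩δℤ} Z(t) ] = E[ sup_{t∈[0,1]} Z(t) ] < ∞. -/
open MeasureTheory ENNReal Filter Set Topology

lemma tendsto_mul_floor_div_nhdsGT (s : ℝ) :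
    Tendsto (fun δ : ℝ => δ * ⌊s / δ⌋) (𝓝[>] 0) (𝓝 s) := by
  have hlower : Tendsto (fun δ : ℝ => s - δ) (𝓝[>] 0) (𝓝 s) := by
    simpa using (tendsto_const_nhds.sub tendsto_id).mono_left (nhdsWithin_le_nhds (a := (0 : ℝ)))
  refine tendsto_of_tendsto_of_tendsto_of_le_of_le' hlower tendsto_const_nhds ?_ ?_
  all_goals filter_upwards [self_mem_nhdsWithin] with δ (hδ : 0 < δ)
  · have := mul_le_mul_of_nonneg_left (Int.sub_one_lt_floor (s / δ)).le hδ.le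
    rwa [mul_sub, mul_div_cancel₀ _ hδ.ne', mul_one] at this
  · have := mul_le_mul_of_nonneg_left (Int.floor_le (s / δ)) hδ.le
    rwa [mul_div_cancel₀ _ hδ.ne'] at this

lemma floor_one_div_mul_le_one {δ : ℝ} (hδ : 0 < δ) : (⌊1 / δ⌋ : ℝ) * δ ≤ 1 := by
  have := mul_le_mul_of_nonneg_right (Int.floor_le (1 / δ)) hδ.le
  rwa [one_div_mul_cancel hδ.ne'] at this

lemma Icc_inter_pickandsGrid1_subset_Icc {δ : ℝ} (hδ : 0 < δ) :
    Icc 0 ((⌊1 / δ⌋ : ℝ) * δ) ∩ pickandsGrid1 δ ⊆ Icc 0 1 :=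
  fun _ ht => Icc_subset_Icc_right (floor_one_div_mul_le_one hδ) ht.1

lemma countable_pickandsGrid1 {δ : ℝ} (hδ : δ ≠ 0) : (pickandsGrid1 δ).Countable := by
  rw [pickandsGrid1, if_neg hδ]
  convert countable_range (fun k : ℤ => δ * k) using 1
  ext t
  simp [eq_comm]

lemma mul_floor_div_mem_Icc_inter_pickandsGrid1 {δ s : ℝ} (hδ : 0 < δ) (hs : s ∈ Icc 0 1) :
    δ * ⌊s / δ⌋ ∈ Icc 0 ((⌊1 / δ⌋ : ℝ) * δ) ∩ pickandsGrid1 δ := by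
  refine ⟨⟨?_, ?_⟩, ?_⟩
  · have : (0 : ℝ) ≤ ⌊s / δ⌋ := by exact_mod_cast Int.floor_nonneg.mpr (div_nonneg hs.1 hδ.le)
    positivity
  · rw [mul_comm]
    gcongr
    exact hs.2
  · rw [pickandsGrid1, if_neg hδ.ne']
    exact ⟨_, rfl⟩

/-- No boundedness is needed: an unbounded real `⨆` is `0`, and so is `⊤.toReal`. -/
lemma toReal_biSup_ofReal {ι : Type*} {f : ι → ℝ} {S : Set ι} (hf : ∀ t ∈ S, 0 ≤ f t) :
    (⨆ t ∈ S, ENNReal.ofReal (f t)).toReal = ⨆ t ∈ S, f t := by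
  rw [toReal_iSup fun t => ne_top_of_le_ne_top ofReal_ne_top (iSup_le fun _ => le_rfl)]
  refine iSup_congr fun t => ?_
  rw [toReal_iSup fun _ => ofReal_ne_top]
  exact iSup_congr_Prop Iff.rfl fun ht => toReal_ofReal (hf t ht)

lemma ofReal_le_tsub_of_le_abs_toReal_sub {a b : ℝ≥0∞} {ε : ℝ} (hb : b ≠ ⊤) (hab : a ≤ b)
    (h : ε ≤ |a.toReal - b.toReal|) : ENNReal.ofReal ε ≤ b - a := by
  apply ofReal_le_of_le_toReal
  rw [toReal_sub_of_le hab hb]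
  rwa [abs_sub_comm, abs_of_nonneg (sub_nonneg.2 (toReal_mono hb hab))] at h

lemma ofReal_sub_ofReal_le (p q : ℝ) :
    ENNReal.ofReal p - ENNReal.ofReal q ≤ ENNReal.ofReal (p - q) :=
  tsub_le_iff_right.2 (by simpa using ofReal_add_le (p := p - q) (q := q))

lemma tsub_le_tsub_finsetSup_add_finsetSup_tsub {ι : Type*} {a y : ℝ≥0∞} {s : Finset ι}
    {v w : ι → ℝ≥0∞} (hw : ∀ k ∈ s, w k ≤ y) :
    a - y ≤ (a - s.sup v) + s.sup (fun k => v k - w k) := by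
  have hv : s.sup v ≤ s.sup (fun k => v k - w k) + y := Finset.sup_le fun k hk => calc
    v k ≤ (v k - w k) + w k := le_tsub_add
    _ ≤ s.sup (fun k => v k - w k) + y :=
      add_le_add (Finset.le_sup (f := fun k => v k - w k) hk) (hw k hk)
  rw [tsub_le_iff_right, add_assoc]
  exact le_tsub_add.trans (add_le_add le_rfl hv)

lemma half_le_or_exists_half_le_of_le_add_finsetSup {ι : Type*} {ε a : ℝ≥0∞} (hε : 0 < ε)
    {s : Finset ι} {c : ι → ℝ≥0∞} (h : ε ≤ a + s.sup c) : ε / 2 ≤ a ∨ ∃ k ∈ s, ε / 2 ≤ c k := by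
  by_contra! hlt
  have hsup : s.sup c < ε / 2 := (Finset.sup_lt_iff (ENNReal.half_pos hε.ne')).2 hlt.2
  exact ((ENNReal.add_lt_add hlt.1 hsup).trans_eq (ENNReal.add_halves ε)).not_ge h

lemma iSup_finsetSup_range (f : ℕ → ℝ≥0∞) : ⨆ n, (Finset.range n).sup f = ⨆ k, f k :=
  le_antisymm (iSup_le fun _ => Finset.sup_le fun k _ => le_iSup f k)
    (iSup_le fun k => le_iSup_of_le (k + 1) (Finset.le_sup (Finset.self_mem_range_succ k)))

section Probability

variable {Ω ι : Type*} [MeasurableSpace Ω] {μ : Measure Ω} {l : Filter ι}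

lemma tendsto_measure_le_ofReal_tsub_ofReal {ξ : ι → Ω → ℝ} {ζ : Ω → ℝ}
    (h : ∀ ε > 0, Tendsto (fun i => μ {ω | ε ≤ |ξ i ω - ζ ω|}) l (𝓝 0)) :
    ∀ ε > 0,
      Tendsto (fun i => μ {ω | ε ≤ ENNReal.ofReal (ζ ω) - ENNReal.ofReal (ξ i ω)}) l (𝓝 0) := by
  intro ε hε
  obtain ⟨r, -, hr, hrε⟩ := lt_iff_exists_real_btwn.1 hε
  have hr' : 0 < r := ofReal_pos.1 hr
  refine tendsto_of_tendsto_of_tendsto_of_le_of_le tendsto_const_nhds (h r hr')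
    (fun _ => bot_le) fun i => measure_mono fun ω hω => ?_
  have hle : ENNReal.ofReal r ≤ ENNReal.ofReal (ζ ω - ξ i ω) :=
    hrε.le.trans (hω.trans (ofReal_sub_ofReal_le _ _))
  rw [mem_ofPred_eq, abs_sub_comm]
  exact ((ofReal_le_ofReal_iff'.1 hle).resolve_right hr'.not_ge).trans (le_abs_self _)

lemma tendsto_measure_le_abs_toReal_sub {X : Ω → ℝ≥0∞} {Y : ι → Ω → ℝ≥0∞}
    (hX : ∀ᵐ ω ∂μ, X ω ≠ ⊤) (hYX : ∀ᶠ i in l, Y i ≤ X)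
    (h : ∀ ε > 0, Tendsto (fun i => μ {ω | ε ≤ X ω - Y i ω}) l (𝓝 0)) :
    ∀ ε > 0, Tendsto (fun i => μ {ω | ε ≤ |(Y i ω).toReal - (X ω).toReal|}) l (𝓝 0) := by
  intro ε hε
  refine tendsto_of_tendsto_of_tendsto_of_le_of_le' tendsto_const_nhds (h _ (ofReal_pos.2 hε))
    (Eventually.of_forall fun _ => bot_le) ?_
  filter_upwards [hYX] with i hi
  exact measure_mono_ae (hX.mono fun ω hω hmem =>
    ofReal_le_tsub_of_le_abs_toReal_sub hω (hi ω) hmem)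

lemma tendsto_measure_le_iSup_tsub_finsetSup [IsFiniteMeasure μ] {V : ℕ → Ω → ℝ≥0∞}
    (hV : ∀ k, Measurable (V k)) (hfin : ∀ᵐ ω ∂μ, ⨆ k, V k ω ≠ ⊤) {ε : ℝ≥0∞} (hε : 0 < ε) :
    Tendsto (fun n => μ {ω | ε ≤ (⨆ k, V k ω) - (Finset.range n).sup (V · ω)}) atTop (𝓝 0) := by
  set A : ℕ → Set Ω := fun n => {ω | ε ≤ (⨆ k, V k ω) - (Finset.range n).sup (V · ω)}
  have hmeas : ∀ n, MeasurableSet (A n) := fun n => by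
    refine measurableSet_le measurable_const ((Measurable.iSup hV).sub ?_)
    simp_rw [Finset.sup_eq_iSup]
    exact Measurable.biSup _ (Finset.countable_toSet _) fun k _ => hV k
  have hanti : Antitone A := fun m n hmn ω (hω : ε ≤ _) => show ε ≤ _ from
    hω.trans (tsub_le_tsub_left (Finset.sup_mono (Finset.range_mono hmn)) _)
  have hnull : μ (⋂ n, A n) = 0 := by
    refine measure_mono_null (fun ω hω => ?_) (ae_iff.1 hfin)
    rw [mem_ofPred_eq, not_not]
    by_contra hne
    have : ε ≤ (⨆ k, V k ω) - ⨆ n, (Finset.range n).sup (V · ω) := by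
      rw [ENNReal.sub_iSup hne]
      exact le_iInf fun n => mem_iInter.1 hω n
    rw [iSup_finsetSup_range, tsub_self] at this
    exact hε.not_ge this
  rw [← hnull]
  exact tendsto_measure_iInter_atTop (fun n => (hmeas n).nullMeasurableSet) hanti
    ⟨0, measure_ne_top _ _⟩

lemma tendsto_measure_le_tsub_of_ae_eq_iSup [IsFiniteMeasure μ] {V : ℕ → Ω → ℝ≥0∞}
    {X : Ω → ℝ≥0∞} {Y : ι → Ω → ℝ≥0∞} {W : ℕ → ι → Ω → ℝ≥0∞} (hV : ∀ k, Measurable (V k))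
    (hXV : ∀ᵐ ω ∂μ, X ω = ⨆ k, V k ω) (hX : ∀ᵐ ω ∂μ, X ω ≠ ⊤) (hWY : ∀ k, ∀ᶠ i in l, W k i ≤ Y i)
    (hW : ∀ k, ∀ ε > 0, Tendsto (fun i => μ {ω | ε ≤ V k ω - W k i ω}) l (𝓝 0)) :
    ∀ ε > 0, Tendsto (fun i => μ {ω | ε ≤ X ω - Y i ω}) l (𝓝 0) := by
  intro ε hε
  have hε2 : 0 < ε / 2 := ENNReal.half_pos hε.ne'
  have hfin : ∀ᵐ ω ∂μ, ⨆ k, V k ω ≠ ⊤ := by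
    filter_upwards [hXV, hX] with ω hXω hfinω
    rwa [← hXω]
  rw [ENNReal.tendsto_nhds_zero]
  intro η hη
  have hη2 : 0 < η / 2 := ENNReal.half_pos hη.ne'
  obtain ⟨n, hn⟩ := (ENNReal.tendsto_nhds_zero.1
    (tendsto_measure_le_iSup_tsub_finsetSup hV hfin hε2) _ hη2).exists
  have hsum : Tendsto (fun i => ∑ k ∈ Finset.range n, μ {ω | ε / 2 ≤ V k ω - W k i ω}) l (𝓝 0) := by
    simpa using tendsto_finsetSum _ fun k _ => hW k _ hε2
  filter_upwards [ENNReal.tendsto_nhds_zero.1 hsum _ hη2,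
    (eventually_all_finset (Finset.range n)).2 fun k _ => hWY k] with i hsumi hWYi
  calc μ {ω | ε ≤ X ω - Y i ω}
      ≤ μ ({ω | ε / 2 ≤ (⨆ k, V k ω) - (Finset.range n).sup (V · ω)} ∪
          ⋃ k ∈ Finset.range n, {ω | ε / 2 ≤ V k ω - W k i ω}) := by
        refine measure_mono_ae (hXV.mono fun ω hXω (hmem : ε ≤ X ω - Y i ω) => ?_)
        rw [hXω] at hmem
        have := hmem.trans (tsub_le_tsub_finsetSup_add_finsetSup_tsub (a := ⨆ k, V k ω)
          (v := (V · ω)) fun k hk => hWYi k hk ω)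
        rcases half_le_or_exists_half_le_of_le_add_finsetSup hε this with h | ⟨k, hk, h⟩
        · exact Or.inl h
        · exact Or.inr (mem_biUnion hk h)
    _ ≤ η / 2 + η / 2 :=
      (measure_union_le _ _).trans (add_le_add hn ((measure_biUnion_finset_le _ _).trans hsumi))
    _ = η := ENNReal.add_halves η

lemma tendsto_lintegral_zero_of_tendsto_measure [IsFiniteMeasure μ] {f : ι → Ω → ℝ≥0∞}
    {g : Ω → ℝ≥0∞} (hg : ∫⁻ ω, g ω ∂μ ≠ ⊤) (hfg : ∀ᶠ i in l, f i ≤ᵐ[μ] g)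
    (hf : ∀ ε > 0, Tendsto (fun i => μ {ω | ε ≤ f i ω}) l (𝓝 0)) :
    Tendsto (fun i => ∫⁻ ω, f i ω ∂μ) l (𝓝 0) := by
  rw [ENNReal.tendsto_nhds_zero]
  intro η hη
  have hη2 : η / 2 ≠ 0 := (ENNReal.half_pos hη.ne').ne'
  obtain ⟨ε, hε, hεη⟩ := ENNReal.exists_pos_mul_lt (measure_ne_top μ univ) hη2
  filter_upwards [hfg, ENNReal.tendsto_nhds_zero.1 (tendsto_setLIntegral_zero hg (hf ε hε)) _
    (pos_iff_ne_zero.2 hη2)] with i hfgi hseti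
  calc ∫⁻ ω, f i ω ∂μ ≤ ∫⁻ ω, ε + {ω | ε ≤ f i ω}.indicator g ω ∂μ := by
        refine lintegral_mono_ae (hfgi.mono fun ω hω => ?_)
        by_cases hεω : ε ≤ f i ω
        · rw [indicator_of_mem (show ω ∈ {ω | ε ≤ f i ω} from hεω)]
          exact hω.trans le_add_self
        · exact (not_le.1 hεω).le.trans le_self_add
    _ = ε * μ univ + ∫⁻ ω, {ω | ε ≤ f i ω}.indicator g ω ∂μ := by
        rw [lintegral_add_left measurable_const, lintegral_const]
    _ ≤ η / 2 + η / 2 := add_le_add hεη.le ((lintegral_indicator_le _ _).trans hseti)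
    _ = η := ENNReal.add_halves η

lemma tendsto_lintegral_of_tendsto_measure_le_tsub [IsFiniteMeasure μ] {X : Ω → ℝ≥0∞}
    {Y : ι → Ω → ℝ≥0∞} (hX : ∫⁻ ω, X ω ∂μ ≠ ⊤) (hY : ∀ᶠ i in l, AEMeasurable (Y i) μ)
    (hYX : ∀ᶠ i in l, Y i ≤ᵐ[μ] X)
    (h : ∀ ε > 0, Tendsto (fun i => μ {ω | ε ≤ X ω - Y i ω}) l (𝓝 0)) :
    Tendsto (fun i => ∫⁻ ω, Y i ω ∂μ) l (𝓝 (∫⁻ ω, X ω ∂μ)) := by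
  have hgap : Tendsto (fun i => ∫⁻ ω, X ω - Y i ω ∂μ) l (𝓝 0) :=
    tendsto_lintegral_zero_of_tendsto_measure hX (Eventually.of_forall fun _ =>
      Eventually.of_forall fun _ => tsub_le_self) h
  have hsplit : ∀ᶠ i in l, ∫⁻ ω, Y i ω ∂μ = ∫⁻ ω, X ω ∂μ - ∫⁻ ω, X ω - Y i ω ∂μ := by
    filter_upwards [hY, hYX] with i hYi hYXi
    have hsum : ∫⁻ ω, X ω ∂μ = ∫⁻ ω, Y i ω ∂μ + ∫⁻ ω, X ω - Y i ω ∂μ := by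
      rw [← lintegral_add_left' hYi]
      exact lintegral_congr_ae (hYXi.mono fun ω hω => (add_tsub_cancel_of_le hω).symm)
    rw [hsum, ENNReal.add_sub_cancel_right]
    exact ne_top_of_le_ne_top hX (hsum ▸ le_add_self)
  simpa using (tendsto_congr' hsplit).2 (ENNReal.Tendsto.sub tendsto_const_nhds hgap (Or.inl hX))

lemma exists_seq_mem_Icc_ae_biSup_eq {α : Type*} [CompleteLattice α] {a b : ℝ} (hab : a ≤ b)
    {D₀ : Set ℝ} (hD₀ : D₀.Countable) {f : Ω → ℝ → α}
    (h : ∀ᵐ ω ∂μ, ⨆ t ∈ Ioo a b ∩ D₀, f ω t = ⨆ t ∈ Ioo a b, f ω t) :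
    ∃ e : ℕ → ℝ, (∀ n, e n ∈ Icc a b) ∧ ∀ᵐ ω ∂μ, ⨆ t ∈ Icc a b, f ω t = ⨆ n, f ω (e n) := by
  have hD : (Ioo a b ∩ D₀ ∪ {a, b}).Countable :=
    (hD₀.mono inter_subset_right).union (toFinite {a, b}).countable
  obtain ⟨e, he⟩ := hD.exists_eq_range ⟨a, Or.inr (mem_insert a _)⟩
  refine ⟨e, fun n => ?_, h.mono fun ω hω => ?_⟩
  · rw [← Ioo_union_both hab]
    exact union_subset_union_left _ inter_subset_left (he ▸ mem_range_self n)
  · rw [← iSup_range (g := f ω), ← he, iSup_union, hω, ← iSup_union, Ioo_union_both hab]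

end Probability

/-- with `a_δ = ⌊1/δ⌋δ`, the discrete maxima
`max_{t ∈ [0,a_δ] ∩ δℤ} Z(t)` converge in probability to `sup_{t ∈ [0,1]} Z(t)`
as `δ ↓ 0`, and the corresponding expectations converge to
`E[ sup_{t ∈ [0,1]} Z(t) ] < ∞`. -/
theorem pickands_discrete_max_convergence
    {Ω : Type*} [MeasurableSpace Ω] (P : Measure Ω) [IsProbabilityMeasure P]
    (Z : ℝ → Ω → ℝ)
    (hjm : Measurable (Function.uncurry Z))
    (hnn : ∀ t ω, 0 ≤ Z t ω)
    (hsep : ∃ D₀ : Set ℝ, D₀.Countable ∧ Dense D₀ ∧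
      ∀ᵐ ω ∂P, ∀ U : Set ℝ, IsOpen U →
        (⨆ t ∈ U ∩ D₀, ENNReal.ofReal (Z t ω)) = ⨆ t ∈ U, ENNReal.ofReal (Z t ω))
    (hsc : ∀ t : ℝ, ∀ ε > (0 : ℝ),
      Tendsto (fun s => P {ω | ε ≤ |Z s ω - Z t ω|}) (𝓝 t) (𝓝 0))
    (hfin : esupField1 P Z (Set.Icc 0 1) ≠ ⊤) :
    (∀ ε > (0 : ℝ),
      Tendsto
        (fun δ : ℝ => P {ω |
          ε ≤ |(⨆ t ∈ Set.Icc 0 ((⌊1 / δ⌋ : ℝ) * δ) ∩ pickandsGrid1 δ, Z t ω) -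
            ⨆ t ∈ Set.Icc (0 : ℝ) 1, Z t ω|})
        (𝓝[>] 0) (𝓝 0)) ∧
    Tendsto
      (fun δ : ℝ => esupField1 P Z (Set.Icc 0 ((⌊1 / δ⌋ : ℝ) * δ) ∩ pickandsGrid1 δ))
      (𝓝[>] 0) (𝓝 (esupField1 P Z (Set.Icc 0 1))) ∧
    esupField1 P Z (Set.Icc 0 1) < ⊤ := by
  obtain ⟨D₀, hD₀, -, hsepae⟩ := hsep
  obtain ⟨e, he, hXe⟩ := exists_seq_mem_Icc_ae_biSup_eq zero_le_one hD₀
    (f := fun ω t => ENNReal.ofReal (Z t ω)) (hsepae.mono fun ω hω => hω _ isOpen_Ioo)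
  set X : Ω → ℝ≥0∞ := fun ω => ⨆ t ∈ Icc (0 : ℝ) 1, ENNReal.ofReal (Z t ω)
  set Y : ℝ → Ω → ℝ≥0∞ := fun δ ω =>
    ⨆ t ∈ Icc 0 ((⌊1 / δ⌋ : ℝ) * δ) ∩ pickandsGrid1 δ, ENNReal.ofReal (Z t ω)
  have hZ : ∀ t, Measurable (Z t) := fun t => hjm.comp measurable_prodMk_left
  have hXm : AEMeasurable X P :=
    (Measurable.iSup fun n => (hZ (e n)).ennreal_ofReal).aemeasurable.congr
      (hXe.mono fun _ h => h.symm)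
  have hXfin : ∀ᵐ ω ∂P, X ω ≠ ⊤ := (ae_lt_top' hXm hfin).mono fun _ h => h.ne
  have hpos : ∀ᶠ δ in 𝓝[>] (0 : ℝ), 0 < δ := self_mem_nhdsWithin
  have hYm : ∀ᶠ δ in 𝓝[>] (0 : ℝ), AEMeasurable (Y δ) P := hpos.mono fun δ hδ =>
    (Measurable.biSup _ ((countable_pickandsGrid1 hδ.ne').mono inter_subset_right)
      fun t _ => (hZ t).ennreal_ofReal).aemeasurable
  have hYX : ∀ᶠ δ in 𝓝[>] (0 : ℝ), Y δ ≤ X :=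
    hpos.mono fun δ hδ ω => biSup_mono fun t ht => Icc_inter_pickandsGrid1_subset_Icc hδ ht
  have hconv := tendsto_measure_le_tsub_of_ae_eq_iSup (fun n => (hZ (e n)).ennreal_ofReal) hXe
    hXfin (W := fun n δ ω => ENNReal.ofReal (Z (δ * ⌊e n / δ⌋) ω))
    (fun n => hpos.mono fun δ hδ ω => le_iSup₂_of_le (f := fun t _ => ENNReal.ofReal (Z t ω)) _
      (mul_floor_div_mem_Icc_inter_pickandsGrid1 hδ (he n)) le_rfl)
    (fun n => tendsto_measure_le_ofReal_tsub_ofReal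
      fun ε hε => (hsc (e n) ε hε).comp (tendsto_mul_floor_div_nhdsGT (e n)))
  refine ⟨?_, tendsto_lintegral_of_tendsto_measure_le_tsub hfin hYm
    (hYX.mono fun δ h => Eventually.of_forall h) hconv, hfin.lt_top⟩
  simp_rw [← toReal_biSup_ofReal (fun t _ => hnn t _)]
  exact tendsto_measure_le_abs_toReal_sub hXfin hYX hconv
end

section
/- If ℙ(Z(0) > 0) = 1, then for every t ∈ ℝ^d one has E[ Z(t) 1{Z(0) > 0} ] = E[ Z(0) 1{Z(−t) > 0} ] = E[Z(0)]; in particular, ℙ(Z(t) > 0) = 1 for all t ∈ ℝ^d. -/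
open MeasureTheory ENNReal Filter Set Topology

/-- if `ℙ(Z(0) > 0) = 1`, then for every `t ∈ ℝ^d`,
`E[Z(t) 1{Z(0) > 0}] = E[Z(0) 1{Z(−t) > 0}] = E[Z(0)]`, and in particular
`ℙ(Z(t) > 0) = 1` for all `t ∈ ℝ^d`. -/
theorem positivity_propagates
    {Ω : Type*} [MeasurableSpace Ω] (P : Measure Ω) [IsProbabilityMeasure P]
    (d : ℕ) (hd : 0 < d) (Z : (Fin d → ℝ) → Ω → ℝ)
    (hjm : Measurable (Function.uncurry Z))
    (hnn : ∀ t ω, 0 ≤ Z t ω)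
    (hMS : ∀ t : Fin d → ℝ, ∫⁻ ω, ENNReal.ofReal (Z t ω) ∂P = 1)
    (hrin : ∀ h : Fin d → ℝ, ∀ F : ((Fin d → ℝ) → ℝ) → ℝ≥0∞, Measurable F →
      (∀ c : ℝ, 0 < c → ∀ f : (Fin d → ℝ) → ℝ, F (c • f) = F f) →
      ∫⁻ ω, ENNReal.ofReal (Z h ω) * F (fun t => Z t ω) ∂P =
        ∫⁻ ω, ENNReal.ofReal (Z 0 ω) * F (fun t => Z (t - h) ω) ∂P)
    (hz0 : P {ω | 0 < Z 0 ω} = 1) :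
    ∀ t : Fin d → ℝ,
      (∫⁻ ω in {ω | 0 < Z 0 ω}, ENNReal.ofReal (Z t ω) ∂P =
        ∫⁻ ω in {ω | 0 < Z (-t) ω}, ENNReal.ofReal (Z 0 ω) ∂P) ∧
      (∫⁻ ω in {ω | 0 < Z 0 ω}, ENNReal.ofReal (Z t ω) ∂P =
        ∫⁻ ω, ENNReal.ofReal (Z 0 ω) ∂P) ∧
      P {ω | 0 < Z t ω} = 1 := by
  have hZm : ∀ s : Fin d → ℝ, Measurable (Z s) := fun s =>
    hjm.comp measurable_prodMk_left
  set F : ((Fin d → ℝ) → ℝ) → ℝ≥0∞ := fun f => if 0 < f 0 then 1 else 0 with hF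
  have hFm : Measurable F :=
    Measurable.ite (measurableSet_lt measurable_const (measurable_pi_apply 0))
      measurable_const measurable_const
  have hFhom : ∀ c : ℝ, 0 < c → ∀ f : (Fin d → ℝ) → ℝ, F (c • f) = F f := by
    intro c hc f
    simp only [hF, Pi.smul_apply, smul_eq_mul]
    simp only [mul_pos_iff_of_pos_left hc]
  have key : ∀ (g w : Ω → ℝ), Measurable w →
      ∫⁻ ω, ENNReal.ofReal (g ω) * (if 0 < w ω then 1 else 0) ∂P =
        ∫⁻ ω in {ω | 0 < w ω}, ENNReal.ofReal (g ω) ∂P := by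
    intro g w hw
    rw [← lintegral_indicator (measurableSet_lt measurable_const hw)]
    congr 1; ext ω
    by_cases h : 0 < w ω <;> simp [Set.indicator, h]
  have main : ∀ h : Fin d → ℝ,
      ∫⁻ ω in {ω | 0 < Z 0 ω}, ENNReal.ofReal (Z h ω) ∂P =
        ∫⁻ ω in {ω | 0 < Z (-h) ω}, ENNReal.ofReal (Z 0 ω) ∂P := by
    intro h
    have e := hrin h F hFm hFhom
    simp only [hF] at e
    rw [key (Z h) (Z 0) (hZm 0), key (Z 0) (Z (0 - h)) (hZm _)] at e
    rwa [zero_sub] at e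
  have hs0 : MeasurableSet {ω | 0 < Z 0 ω} :=
    measurableSet_lt measurable_const (hZm 0)
  have hcompl : P {ω | 0 < Z 0 ω}ᶜ = 0 := by
    rw [measure_compl hs0 (measure_ne_top P _), hz0, measure_univ, tsub_self]
  have hrestr : P.restrict {ω | 0 < Z 0 ω} = P := by
    rw [Measure.restrict_congr_set (ae_eq_univ.mpr hcompl), Measure.restrict_univ]
  have full : ∀ h : Fin d → ℝ,
      ∫⁻ ω in {ω | 0 < Z 0 ω}, ENNReal.ofReal (Z h ω) ∂P = 1 := by
    intro h; rw [hrestr, hMS h]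
  intro t
  refine ⟨main t, by rw [full t, hMS 0], ?_⟩
  have hBt : MeasurableSet {ω | 0 < Z t ω} :=
    measurableSet_lt measurable_const (hZm t)
  have h1 : ∫⁻ ω in {ω | 0 < Z t ω}, ENNReal.ofReal (Z 0 ω) ∂P = 1 := by
    have := main (-t); rw [neg_neg, full (-t)] at this; exact this.symm
  have hsplit := lintegral_add_compl (fun ω => ENNReal.ofReal (Z 0 ω)) hBt (μ := P)
  rw [hMS 0, h1] at hsplit
  have hzero : ∫⁻ ω in {ω | 0 < Z t ω}ᶜ, ENNReal.ofReal (Z 0 ω) ∂P = 0 := by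
    have h' : (1 : ℝ≥0∞) + (∫⁻ ω in {ω | 0 < Z t ω}ᶜ, ENNReal.ofReal (Z 0 ω) ∂P) = 1 + 0 := by
      rw [add_zero, hsplit]
    exact (ENNReal.add_right_inj one_ne_top).mp h'
  have hae0 : ∀ᵐ ω ∂P.restrict {ω | 0 < Z t ω}ᶜ, ENNReal.ofReal (Z 0 ω) = 0 :=
    (lintegral_eq_zero_iff (ENNReal.measurable_ofReal.comp (hZm 0))).mp hzero
  have haepos : ∀ᵐ ω ∂P, 0 < Z 0 ω := by
    rw [ae_iff]; rw [show {ω | ¬ 0 < Z 0 ω} = {ω | 0 < Z 0 ω}ᶜ from rfl]; exact hcompl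
  have hfalse : ∀ᵐ ω ∂P.restrict {ω | 0 < Z t ω}ᶜ, False := by
    filter_upwards [hae0, ae_restrict_of_ae haepos] with ω h1' h2'
    simp only [Function.comp, ENNReal.ofReal_eq_zero] at h1'
    linarith
  have hA0 : P {ω | 0 < Z t ω}ᶜ = 0 := by
    have := ae_iff.mp hfalse
    simp only [not_false_eq_true, Set.setOf_true] at this
    rwa [Measure.restrict_apply_univ] at this
  have hmc := measure_compl hBt (measure_ne_top P _)
  rw [hA0, measure_univ] at hmc
  have hle : P {ω | 0 < Z t ω} ≤ 1 := prob_le_one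
  have hge : (1 : ℝ≥0∞) ≤ P {ω | 0 < Z t ω} := tsub_eq_zero_iff_le.mp hmc.symm
  exact le_antisymm hle hge
end

section
/- Let L : ℝ^d → (0,∞) be measurable with ∫_{ℝ^d} L(t) dt = 1, and let η > 0. Then ∫_{ℝ^d} L(s) / ( η^d Σ_{t∈ηℤ^d} L(t+s) ) ds = 1, where the integrand is interpreted as 0 at points s where the sum Σ_{t∈ηℤ^d} L(t+s) is infinite. -/
/-!
Write `P(s) = Σ_{k ∈ ℤ^d} L(ηk + s)` for the periodization of `L`. Unfolding the integral over
`ℝ^d` along the fundamental domain `D = [0, η)^d` of `ηℤ^d`, and using that `P` is `ηℤ^d`-periodic,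
turns `∫ L / P` into `∫_D P / P = vol D = η^d`. The only subtlety is that `P / P = 1` needs
`P < ∞`, which holds almost everywhere on `D` because `∫_D P = ∫ L < ∞`; positivity of `L` gives
`P ≠ 0`.
-/

open MeasureTheory ENNReal Filter Set Topology

theorem tsum_vadd_vadd {G α M : Type*} [AddGroup G] [AddAction G α] [AddCommMonoid M]
    [TopologicalSpace M] (f : α → M) (g : G) (x : α) :
    ∑' h : G, f (h +ᵥ g +ᵥ x) = ∑' h : G, f (h +ᵥ x) := by
  simp_rw [vadd_vadd]
  exact (Equiv.addRight g).tsum_eq (fun h => f (h +ᵥ x))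

namespace MeasureTheory.IsAddFundamentalDomain

variable {G α : Type*} [AddGroup G] [Countable G] [AddAction G α] [MeasurableSpace α]
  [MeasurableConstVAdd G α] {μ : Measure α} [VAddInvariantMeasure G α μ] {s : Set α}
  {f : α → ℝ≥0∞}

theorem setLIntegral_tsum_vadd (h : IsAddFundamentalDomain G s μ) (hf : Measurable f) :
    ∫⁻ x in s, ∑' g : G, f (g +ᵥ x) ∂μ = ∫⁻ x, f x ∂μ := by
  rw [lintegral_tsum (f := fun g x => f (g +ᵥ x))
    fun g => (hf.comp (measurable_const_vadd g)).aemeasurable, h.lintegral_eq_tsum'']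

theorem lintegral_div_tsum_vadd (h : IsAddFundamentalDomain G s μ) (hf : Measurable f)
    (hf0 : ∀ x, f x ≠ 0) (hfi : ∫⁻ x, f x ∂μ ≠ ∞) :
    ∫⁻ x, f x / ∑' g : G, f (g +ᵥ x) ∂μ = μ s := by
  set P : α → ℝ≥0∞ := fun x => ∑' g : G, f (g +ᵥ x)
  have hP : Measurable P := Measurable.tsum fun g => hf.comp (measurable_const_vadd g)
  have hP0 (x : α) : P x ≠ 0 :=
    ENNReal.tsum_eq_zero.not.mpr fun h0 => hf0 x (by simpa using h0 0)
  have hP_lt_top : ∀ᵐ x ∂μ.restrict s, P x < ∞ :=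
    ae_lt_top hP (by rwa [h.setLIntegral_tsum_vadd hf])
  calc ∫⁻ x, f x / P x ∂μ
      = ∑' g : G, ∫⁻ x in s, f (g +ᵥ x) / P (g +ᵥ x) ∂μ := h.lintegral_eq_tsum'' _
    _ = ∑' g : G, ∫⁻ x in s, f (g +ᵥ x) / P x ∂μ := by
        simp_rw [P, tsum_vadd_vadd]
    _ = ∫⁻ x in s, P x / P x ∂μ := by
        rw [← lintegral_tsum (f := fun g x => f (g +ᵥ x) / P x)
          fun g => ((hf.comp (measurable_const_vadd g)).div hP).aemeasurable]
        simp_rw [div_eq_mul_inv, ENNReal.tsum_mul_right, P]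
    _ = ∫⁻ _ in s, 1 ∂μ := lintegral_congr_ae <| hP_lt_top.mono fun x hx =>
        ENNReal.div_self (hP0 x) hx.ne
    _ = μ s := setLIntegral_one s

end MeasureTheory.IsAddFundamentalDomain

open Submodule in
theorem ZSpan.tsum_eq_tsum_sum_zsmul {ι E M : Type*} [Fintype ι] [NormedAddCommGroup E]
    [NormedSpace ℝ E] [AddCommMonoid M] [TopologicalSpace M] (b : Module.Basis ι ℝ E)
    (F : E → M) :
    ∑' g : (span ℤ (range b)).toAddSubgroup, F g = ∑' k : ι → ℤ, F (∑ i, k i • b i) := by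
  change ∑' g : span ℤ (range b), F g = _
  rw [← (b.restrictScalars ℤ).equivFun.symm.toEquiv.tsum_eq]
  simp [Module.Basis.equivFun_symm_apply]

theorem Pi.sum_zsmul_isUnitSMul_basisFun {ι : Type*} [Fintype ι] [DecidableEq ι] {η : ℝ}
    (hη : IsUnit η) (k : ι → ℤ) :
    ∑ i, k i • (Pi.basisFun ℝ ι).isUnitSMul (fun _ => hη) i = fun j => η * k j := by
  ext j
  simp [Module.Basis.isUnitSMul_apply, Finset.sum_apply, Pi.single_apply, mul_comm]

theorem ZSpan.volume_fundamentalDomain_isUnitSMul_basisFun {ι : Type*} [Fintype ι]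
    [DecidableEq ι] {η : ℝ} (hη : IsUnit η) :
    volume (ZSpan.fundamentalDomain ((Pi.basisFun ℝ ι).isUnitSMul (fun _ => hη))) =
      ENNReal.ofReal (|η| ^ Fintype.card ι) := by
  rw [ZSpan.volume_fundamentalDomain, ← Pi.basisFun_det_apply, Module.Basis.det_isUnitSMul]
  simp

theorem lintegral_div_tsum_intLattice {ι : Type*} [Fintype ι] {η : ℝ} (hη : η ≠ 0)
    {f : (ι → ℝ) → ℝ≥0∞} (hf : Measurable f) (hf0 : ∀ x, f x ≠ 0) (hfi : ∫⁻ x, f x ≠ ∞) :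
    ∫⁻ x, f x / ∑' k : ι → ℤ, f ((fun i => η * k i) + x) =
      ENNReal.ofReal (|η| ^ Fintype.card ι) := by
  classical
  set b := (Pi.basisFun ℝ ι).isUnitSMul (fun _ => hη.isUnit)
  have : Countable (Submodule.span ℤ (range b)).toAddSubgroup :=
    inferInstanceAs (Countable (Submodule.span ℤ (range b)))
  calc ∫⁻ x, f x / ∑' k : ι → ℤ, f ((fun i => η * k i) + x)
      = ∫⁻ x, f x / ∑' g : (Submodule.span ℤ (range b)).toAddSubgroup, f (g +ᵥ x) := by
        refine lintegral_congr fun x => ?_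
        simp only [AddSubgroup.vadd_def, vadd_eq_add]
        rw [ZSpan.tsum_eq_tsum_sum_zsmul b (fun y => f (y + x))]
        simp only [b, Pi.sum_zsmul_isUnitSMul_basisFun]
    _ = volume (ZSpan.fundamentalDomain b) :=
        (ZSpan.isAddFundamentalDomain' b volume).lintegral_div_tsum_vadd hf hf0 hfi
    _ = ENNReal.ofReal (|η| ^ Fintype.card ι) :=
        ZSpan.volume_fundamentalDomain_isUnitSMul_basisFun _

theorem lattice_average_integral_eq_one_general
    (d : ℕ) (L : (Fin d → ℝ) → ℝ)
    (hmeas : Measurable L)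
    (hpos : ∀ t, 0 < L t)
    (hint : ∫⁻ t : Fin d → ℝ, ENNReal.ofReal (L t) = 1)
    (η : ℝ) (hη : 0 < η) :
    ∫⁻ s : Fin d → ℝ, ENNReal.ofReal (L s) /
      (ENNReal.ofReal (η ^ d) *
        ∑' k : Fin d → ℤ, ENNReal.ofReal (L ((fun i => η * k i) + s))) = 1 := by
  have hc0 : ENNReal.ofReal (η ^ d) ≠ 0 := by simpa using pow_pos hη d
  have hlattice := lintegral_div_tsum_intLattice (f := fun t => ENNReal.ofReal (L t)) hη.ne'
    hmeas.ennreal_ofReal (fun t => (ENNReal.ofReal_pos.mpr (hpos t)).ne') (hint ▸ one_ne_top)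
  rw [abs_of_pos hη, Fintype.card_fin] at hlattice
  calc _ = ∫⁻ s, (ENNReal.ofReal (η ^ d))⁻¹ * (ENNReal.ofReal (L s) /
        ∑' k : Fin d → ℤ, ENNReal.ofReal (L ((fun i => η * k i) + s))) := by
        refine lintegral_congr fun s => ?_
        rw [div_eq_mul_inv, ENNReal.mul_inv (.inl hc0) (.inl ofReal_ne_top), div_eq_mul_inv,
          mul_left_comm]
    _ = 1 := by
      rw [lintegral_const_mul' _ _ (inv_ne_top.mpr hc0), hlattice,
        ENNReal.inv_mul_cancel hc0 ofReal_ne_top]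

/-- for a measurable, strictly positive `L : ℝ^d → (0,∞)` with
`∫_{ℝ^d} L = 1` and `η > 0`, one has
`∫_{ℝ^d} L(s) / (η^d ∑_{t ∈ ηℤ^d} L(t+s)) ds = 1`, the integrand being `0`
where the sum is infinite (convention of `ℝ≥0∞` division). -/
theorem lattice_average_integral_eq_one
    (d : ℕ) (hd : 0 < d) (L : (Fin d → ℝ) → ℝ)
    (hmeas : Measurable L)
    (hpos : ∀ t, 0 < L t)
    (hint : ∫⁻ t : Fin d → ℝ, ENNReal.ofReal (L t) = 1)
    (η : ℝ) (hη : 0 < η) :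
    ∫⁻ s : Fin d → ℝ, ENNReal.ofReal (L s) /
      (ENNReal.ofReal (η ^ d) *
        ∑' k : Fin d → ℤ, ENNReal.ofReal (L ((fun i => η * k i) + s))) = 1 :=
  lattice_average_integral_eq_one_general d L hmeas hpos hint η hη
end

section
/- Let L : ℝ^d → [0,∞) be continuous and strictly positive with ∫_{ℝ^d} L(t) dt = 1, and suppose ∫_{ℝ^d} sup_{t∈[0,T]^d} L(t−x) dx < ∞ for every T > 0. Then lim_{T→∞} T^{-d} ∫_{ℝ^d} sup_{t∈[0,T]^d} L(t−x) dx = sup_{t∈ℝ^d} L(t), and in particular sup_{t∈ℝ^d} L(t) < ∞. -/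
open MeasureTheory ENNReal Filter Set Topology

noncomputable def supShift {E : Type*} [Sub E] (F : E → ℝ≥0∞) (S : Set E) (x : E) : ℝ≥0∞ :=
  ⨆ t ∈ S, F (t - x)

theorem LowerSemicontinuous.indicator_of_isOpen {α : Type*} [TopologicalSpace α]
    {f : α → ℝ≥0∞} {U : Set α} (hf : LowerSemicontinuous f) (hU : IsOpen U) :
    LowerSemicontinuous (U.indicator f) := by
  intro x y hy
  by_cases hx : x ∈ U
  · rw [indicator_of_mem hx] at hy
    filter_upwards [hU.mem_nhds hx, hf x y hy] with z hzU hz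
    rwa [indicator_of_mem hzU]
  · simp [indicator_of_notMem hx] at hy

section AddCommGroup

variable {E : Type*} [AddCommGroup E] {F : E → ℝ≥0∞} {S : Set E}

theorem le_supShift {t : E} (ht : t ∈ S) (x : E) : F (t - x) ≤ supShift F S x :=
  le_iSup₂ (f := fun t (_ : t ∈ S) => F (t - x)) t ht

theorem supShift_mono {G : E → ℝ≥0∞} (h : F ≤ G) (x : E) : supShift F S x ≤ supShift G S x :=
  iSup₂_mono fun t _ => h (t - x)

theorem supShift_image_add_const (k x : E) :
    supShift F ((· + k) '' S) x = supShift F S (x - k) := by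
  simp only [supShift, iSup_image, sub_sub_eq_add_sub]

theorem supShift_le_sum_of_subset_biUnion {κ : Type*} {s : Finset κ} {A : κ → Set E}
    (hS : S ⊆ ⋃ k ∈ s, A k) (x : E) : supShift F S x ≤ ∑ k ∈ s, supShift F (A k) x := by
  refine iSup₂_le fun t ht => ?_
  obtain ⟨k, hk, htk⟩ := mem_iUnion₂.1 (hS ht)
  exact (le_supShift htk x).trans
    (Finset.single_le_sum (f := fun k => supShift F (A k) x) (fun _ _ => zero_le) hk)

theorem supShift_le_indicator_add_supShift_indicator_compl {V A : Set E} {c : ℝ≥0∞}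
    (hFV : ∀ v ∈ V, F v ≤ c) (hA : ∀ t ∈ S, ∀ v ∈ V, t - v ∈ A) (x : E) :
    supShift F S x ≤ A.indicator (fun _ => c) x + supShift (Vᶜ.indicator F) S x := by
  refine iSup₂_le fun t ht => ?_
  by_cases hv : t - x ∈ V
  · have hx : x ∈ A := by simpa using hA t ht _ hv
    rw [indicator_of_mem hx]
    exact (hFV _ hv).trans le_self_add
  · calc F (t - x) = Vᶜ.indicator F (t - x) := (indicator_of_mem hv F).symm
      _ ≤ _ := (le_supShift ht x).trans le_add_self

theorem LowerSemicontinuous.supShift [TopologicalSpace E] [IsTopologicalAddGroup E]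
    (hF : LowerSemicontinuous F) (S : Set E) : LowerSemicontinuous (supShift F S) :=
  lowerSemicontinuous_biSup fun t _ => hF.comp (continuous_sub_left t)

variable [MeasurableSpace E] (μ : Measure E)

theorem lintegral_supShift_le_add_lintegral_supShift_indicator_compl {V A : Set E} {c : ℝ≥0∞}
    (hFV : ∀ v ∈ V, F v ≤ c) (hA : ∀ t ∈ S, ∀ v ∈ V, t - v ∈ A) (hAm : MeasurableSet A) :
    ∫⁻ x, supShift F S x ∂μ ≤ c * μ A + ∫⁻ x, supShift (Vᶜ.indicator F) S x ∂μ :=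
  calc ∫⁻ x, supShift F S x ∂μ
      ≤ ∫⁻ x, (A.indicator (fun _ => c) x + supShift (Vᶜ.indicator F) S x) ∂μ :=
        lintegral_mono (supShift_le_indicator_add_supShift_indicator_compl hFV hA)
    _ = _ := by
        rw [lintegral_add_left (measurable_const.indicator hAm), lintegral_indicator_const hAm]

variable [MeasurableAdd E] [μ.IsAddLeftInvariant]

theorem lintegral_supShift_image_add_const (k : E) :
    ∫⁻ x, supShift F ((· + k) '' S) x ∂μ = ∫⁻ x, supShift F S x ∂μ := by
  simp_rw [supShift_image_add_const]
  exact lintegral_sub_right_eq_self _ k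

theorem mul_measure_le_lintegral_supShift (hS : MeasurableSet S) (y : E) :
    F y * μ S ≤ ∫⁻ x, supShift F S x ∂μ := by
  calc F y * μ S = ∫⁻ x, ((· + y) ⁻¹' S).indicator (fun _ => F y) x ∂μ := by
        rw [lintegral_indicator_const (hS.preimage (measurable_add_const y)),
          measure_preimage_add_right]
    _ ≤ _ := lintegral_mono fun x => ?_
  by_cases hx : x + y ∈ S
  · rw [indicator_of_mem (show x ∈ (· + y) ⁻¹' S from hx)]
    simpa using le_supShift (F := F) hx x
  · rw [indicator_of_notMem (show x ∉ (· + y) ⁻¹' S from hx)]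
    exact zero_le

end AddCommGroup

theorem tendsto_lintegral_supShift_indicator_compl_closedBall {E : Type*} [NormedAddCommGroup E]
    [MeasurableSpace E] [OpensMeasurableSpace E] {μ : Measure E} {F : E → ℝ≥0∞} {S : Set E}
    (hF : LowerSemicontinuous F) (hS : Bornology.IsBounded S)
    (hfin : ∫⁻ x, supShift F S x ∂μ ≠ ⊤) :
    Tendsto (fun n : ℕ => ∫⁻ x, supShift ((Metric.closedBall 0 n)ᶜ.indicator F) S x ∂μ)
      atTop (𝓝 0) := by
  obtain ⟨R, hR⟩ := hS.subset_closedBall 0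
  have hlim (x : E) :
      Tendsto (fun n : ℕ => supShift ((Metric.closedBall 0 n)ᶜ.indicator F) S x) atTop (𝓝 0) := by
    refine tendsto_const_nhds.congr' ?_
    filter_upwards [eventually_ge_atTop ⌈R + ‖x‖⌉₊] with n hn
    refine (le_antisymm (iSup₂_le fun t ht => (indicator_of_notMem ?_ _).le) zero_le).symm
    rw [notMem_compl_iff, mem_closedBall_zero_iff]
    calc ‖t - x‖ ≤ ‖t‖ + ‖x‖ := norm_sub_le _ _
      _ ≤ R + ‖x‖ := by gcongr; simpa using hR ht
      _ ≤ n := Nat.ceil_le.1 hn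
  simpa using tendsto_lintegral_of_dominated_convergence (supShift F S)
    (fun _ => ((hF.indicator_of_isOpen Metric.isClosed_closedBall.isOpen_compl).supShift
      S).measurable)
    (fun _ => Eventually.of_forall (supShift_mono (indicator_le_self _ _))) hfin
    (Eventually.of_forall hlim)

theorem tendsto_ofReal_pow_div_ofReal_pow {f : ℝ → ℝ}
    (hf : Tendsto (fun T => f T / T) atTop (𝓝 1)) (m : ℕ) :
    Tendsto (fun T => ENNReal.ofReal (f T ^ m) / ENNReal.ofReal (T ^ m)) atTop (𝓝 1) := by
  refine (by simpa using ENNReal.tendsto_ofReal (hf.pow m) :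
    Tendsto (fun T => ENNReal.ofReal ((f T / T) ^ m)) atTop (𝓝 1)).congr' ?_
  filter_upwards [eventually_gt_atTop 0] with T hT
  rw [div_pow, ENNReal.ofReal_div_of_pos (by positivity)]

theorem tendsto_add_const_div_self_atTop (c : ℝ) :
    Tendsto (fun T : ℝ => (T + c) / T) atTop (𝓝 1) := by
  refine (by simpa using tendsto_const_nhds.add (tendsto_id.const_div_atTop c) :
    Tendsto (fun T : ℝ => 1 + c / T) atTop (𝓝 1)).congr' ?_
  filter_upwards [eventually_ne_atTop 0] with T hT
  field_simp

theorem exists_lt_ceil_mem_Icc {T s : ℝ} (hT : 0 < T) (hs : s ∈ Icc 0 T) :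
    ∃ k < ⌈T⌉₊, s ∈ Icc (k : ℝ) (k + 1) := by
  have hT1 : 1 ≤ ⌈T⌉₊ := Nat.one_le_ceil_iff.2 hT
  rcases hs.1.eq_or_lt with rfl | hs0
  · exact ⟨0, hT1, by simp⟩
  have hs1 : 1 ≤ ⌈s⌉₊ := Nat.one_le_ceil_iff.2 hs0
  have hsT : ⌈s⌉₊ ≤ ⌈T⌉₊ := Nat.ceil_mono hs.2
  have hk : ((⌈s⌉₊ - 1 : ℕ) : ℝ) + 1 = ⌈s⌉₊ := by exact_mod_cast Nat.sub_add_cancel hs1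
  refine ⟨⌈s⌉₊ - 1, by omega, ?_, hk ▸ Nat.le_ceil s⟩
  linarith [Nat.ceil_lt_add_one hs0.le]

section Cube

variable {ι : Type*} [Fintype ι]

theorem volume_Icc_const {a b : ℝ} (hab : a ≤ b) :
    volume (Icc (fun _ : ι => a) (fun _ => b)) = ENNReal.ofReal ((b - a) ^ Fintype.card ι) := by
  rw [Real.volume_Icc_pi, Finset.prod_const, Finset.card_univ,
    ENNReal.ofReal_pow (sub_nonneg.2 hab)]

theorem Icc_const_subset_biUnion_unitCube [DecidableEq ι] {T : ℝ} (hT : 0 < T) :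
    Icc (0 : ι → ℝ) (fun _ => T) ⊆
      ⋃ k ∈ Fintype.piFinset fun _ : ι => Finset.range ⌈T⌉₊,
        (· + fun i => (k i : ℝ)) '' Icc 0 1 := by
  intro t ht
  choose k hk htk using fun i => exists_lt_ceil_mem_Icc hT ⟨ht.1 i, ht.2 i⟩
  refine mem_iUnion₂.2 ⟨k, Fintype.mem_piFinset.2 fun i => Finset.mem_range.2 (hk i), ?_⟩
  rw [image_add_const_Icc]
  exact ⟨fun i => by simpa using (htk i).1, fun i => by simpa [add_comm] using (htk i).2⟩

variable {F : (ι → ℝ) → ℝ≥0∞}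

theorem lintegral_supShift_Icc_const_le (hF : LowerSemicontinuous F) {T : ℝ} (hT : 0 < T) :
    ∫⁻ x, supShift F (Icc 0 fun _ => T) x ≤
      ⌈T⌉₊ ^ Fintype.card ι * ∫⁻ x, supShift F (Icc 0 1) x := by
  classical
  let cubes := Fintype.piFinset fun _ : ι => Finset.range ⌈T⌉₊
  calc ∫⁻ x, supShift F (Icc 0 fun _ => T) x
      ≤ ∫⁻ x, ∑ k ∈ cubes, supShift F ((· + fun i => (k i : ℝ)) '' Icc 0 1) x :=
        lintegral_mono (supShift_le_sum_of_subset_biUnion (Icc_const_subset_biUnion_unitCube hT))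
    _ = ∑ k ∈ cubes, ∫⁻ x, supShift F ((· + fun i => (k i : ℝ)) '' Icc 0 1) x :=
        lintegral_finsetSum _ fun _ _ => (hF.supShift _).measurable
    _ = _ := by
        simp only [lintegral_supShift_image_add_const, Finset.sum_const, cubes,
          Fintype.card_piFinset, Finset.card_range, Finset.prod_const, Finset.card_univ,
          nsmul_eq_mul, Nat.cast_pow]

theorem lintegral_supShift_Icc_const_le_add (hF : LowerSemicontinuous F) {c : ℝ≥0∞}
    (hc : ∀ y, F y ≤ c) (n : ℕ) {T : ℝ} (hT : 0 < T) :
    ∫⁻ x, supShift F (Icc 0 fun _ => T) x ≤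
      c * ENNReal.ofReal ((T + 2 * n) ^ Fintype.card ι) + ⌈T⌉₊ ^ Fintype.card ι *
        ∫⁻ x, supShift ((Metric.closedBall 0 n)ᶜ.indicator F) (Icc 0 1) x := by
  have hA : ∀ t ∈ Icc (0 : ι → ℝ) (fun _ => T), ∀ v ∈ Metric.closedBall (0 : ι → ℝ) n,
      t - v ∈ Icc (fun _ => -(n : ℝ)) (fun _ => T + n) := by
    intro t ht v hv
    have hvi (i : ι) : |v i| ≤ n :=
      (norm_le_pi_norm v i).trans (mem_closedBall_zero_iff.1 hv)
    have ht0 (i : ι) : 0 ≤ t i := ht.1 i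
    have htT (i : ι) : t i ≤ T := ht.2 i
    exact ⟨fun i => show -(n : ℝ) ≤ t i - v i by linarith [ht0 i, (abs_le.1 (hvi i)).2],
      fun i => show t i - v i ≤ T + n by linarith [htT i, (abs_le.1 (hvi i)).1]⟩
  have hvol : volume (Icc (fun _ : ι => -(n : ℝ)) (fun _ => T + n)) =
      ENNReal.ofReal ((T + 2 * n) ^ Fintype.card ι) := by
    rw [volume_Icc_const (by linarith [hT.le, (n.cast_nonneg : (0 : ℝ) ≤ n)])]
    ring_nf
  calc ∫⁻ x, supShift F (Icc 0 fun _ => T) x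
      ≤ c * volume (Icc (fun _ : ι => -(n : ℝ)) (fun _ => T + n)) +
          ∫⁻ x, supShift ((Metric.closedBall 0 n)ᶜ.indicator F) (Icc 0 fun _ => T) x :=
        lintegral_supShift_le_add_lintegral_supShift_indicator_compl _ (fun v _ => hc v) hA
          measurableSet_Icc
    _ ≤ _ := by
        rw [hvol]
        gcongr
        exact lintegral_supShift_Icc_const_le
          (hF.indicator_of_isOpen Metric.isClosed_closedBall.isOpen_compl) hT

theorem iSup_le_lintegral_supShift_Icc_zero_one :
    ⨆ y, F y ≤ ∫⁻ x, supShift F (Icc (0 : ι → ℝ) 1) x :=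
  iSup_le fun y => by
    simpa [Real.volume_Icc_pi] using
      mul_measure_le_lintegral_supShift (F := F) volume (measurableSet_Icc (a := 0) (b := 1)) y

theorem tendsto_lintegral_supShift_Icc_const_div (hF : LowerSemicontinuous F)
    (hfin : ∫⁻ x, supShift F (Icc 0 1) x ≠ ⊤) :
    Tendsto (fun T : ℝ => (∫⁻ x, supShift F (Icc 0 fun _ => T) x) /
      ENNReal.ofReal (T ^ Fintype.card ι)) atTop (𝓝 (⨆ y, F y)) := by
  set m := Fintype.card ι
  set c := ⨆ y, F y
  refine tendsto_of_le_liminf_of_limsup_le ?_ ?_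
  · refine iSup_le fun y => le_liminf_of_le (by isBoundedDefault) ?_
    filter_upwards [eventually_gt_atTop 0] with T hT
    have hvol : volume (Icc (0 : ι → ℝ) fun _ => T) = ENNReal.ofReal (T ^ m) := by
      have h := volume_Icc_const (ι := ι) hT.le
      rwa [sub_zero] at h
    rw [ENNReal.le_div_iff_mul_le (Or.inl (ENNReal.ofReal_pos.2 (by positivity)).ne')
      (Or.inl ENNReal.ofReal_ne_top), ← hvol]
    exact mul_measure_le_lintegral_supShift volume measurableSet_Icc y
  set δ := fun n : ℕ => ∫⁻ x, supShift ((Metric.closedBall 0 n)ᶜ.indicator F) (Icc 0 1) x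
  have hδ : Tendsto δ atTop (𝓝 0) :=
    tendsto_lintegral_supShift_indicator_compl_closedBall hF (Metric.isBounded_Icc 0 1) hfin
  refine ge_of_tendsto' (by simpa using tendsto_const_nhds.add hδ) fun n => ?_
  have hvol := tendsto_ofReal_pow_div_ofReal_pow (tendsto_add_const_div_self_atTop (2 * n)) m
  have hceil := tendsto_ofReal_pow_div_ofReal_pow tendsto_nat_ceil_div_atTop m
  calc limsup (fun T : ℝ => (∫⁻ x, supShift F (Icc 0 fun _ => T) x) /
        ENNReal.ofReal (T ^ m)) atTop
      ≤ limsup (fun T : ℝ => c * (ENNReal.ofReal ((T + 2 * n) ^ m) / ENNReal.ofReal (T ^ m)) +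
          δ n * (ENNReal.ofReal ((⌈T⌉₊ : ℝ) ^ m) / ENNReal.ofReal (T ^ m))) atTop := by
        refine limsup_le_limsup ?_
        filter_upwards [eventually_gt_atTop 0] with T hT
        rw [mul_div_assoc', mul_div_assoc', ← ENNReal.add_div,
          ENNReal.ofReal_pow (Nat.cast_nonneg ⌈T⌉₊), ENNReal.ofReal_natCast, mul_comm (δ n)]
        exact ENNReal.div_le_div_right
          (lintegral_supShift_Icc_const_le_add hF (le_iSup F) n hT) _
    _ = c * 1 + δ n * 1 :=
        ((ENNReal.Tendsto.const_mul hvol (Or.inl one_ne_zero)).add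
          (ENNReal.Tendsto.const_mul hceil (Or.inl one_ne_zero))).limsup_eq
    _ = c + δ n := by rw [mul_one, mul_one]

end Cube

theorem pickands_constant_of_density_general
    (d : ℕ) (L : (Fin d → ℝ) → ℝ)
    (hcont : Continuous L)
    (hfin : ∀ T > (0 : ℝ),
      (∫⁻ x : Fin d → ℝ, ⨆ t ∈ pickandsCube d T, ENNReal.ofReal (L (t - x))) ≠ ⊤) :
    Tendsto (fun T : ℝ =>
        (∫⁻ x : Fin d → ℝ, ⨆ t ∈ pickandsCube d T, ENNReal.ofReal (L (t - x))) /
          ENNReal.ofReal (T ^ d))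
      atTop (𝓝 (⨆ t : Fin d → ℝ, ENNReal.ofReal (L t))) ∧
    (⨆ t : Fin d → ℝ, ENNReal.ofReal (L t)) ≠ ⊤ := by
  have hF : LowerSemicontinuous fun t => ENNReal.ofReal (L t) :=
    (ENNReal.continuous_ofReal.comp hcont).lowerSemicontinuous
  have h1 : ∫⁻ x, supShift (fun t => ENNReal.ofReal (L t)) (Icc 0 1) x ≠ ⊤ := hfin 1 one_pos
  refine ⟨?_, ne_top_of_le_ne_top h1 iSup_le_lintegral_supShift_Icc_zero_one⟩
  have h := tendsto_lintegral_supShift_Icc_const_div hF h1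
  rwa [Fintype.card_fin] at h

/-- for continuous strictly positive `L` with `∫ L = 1` and
`∫_{ℝ^d} sup_{t ∈ [0,T]^d} L(t−x) dx < ∞` for all `T > 0`, one has
`lim_{T→∞} T^{-d} ∫_{ℝ^d} sup_{t∈[0,T]^d} L(t−x) dx = sup_{t∈ℝ^d} L(t) < ∞`. -/
theorem pickands_constant_of_density
    (d : ℕ) (hd : 0 < d) (L : (Fin d → ℝ) → ℝ)
    (hcont : Continuous L)
    (hpos : ∀ t, 0 < L t)
    (hint : ∫⁻ t : Fin d → ℝ, ENNReal.ofReal (L t) = 1)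
    (hfin : ∀ T > (0 : ℝ),
      (∫⁻ x : Fin d → ℝ, ⨆ t ∈ pickandsCube d T, ENNReal.ofReal (L (t - x))) ≠ ⊤) :
    Tendsto (fun T : ℝ =>
        (∫⁻ x : Fin d → ℝ, ⨆ t ∈ pickandsCube d T, ENNReal.ofReal (L (t - x))) /
          ENNReal.ofReal (T ^ d))
      atTop (𝓝 (⨆ t : Fin d → ℝ, ENNReal.ofReal (L t))) ∧
    (⨆ t : Fin d → ℝ, ENNReal.ofReal (L t)) ≠ ⊤ :=
  pickands_constant_of_density_general d L hcont hfin
end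

section
/- For every δ of the form δ = 2^{-n} (n ∈ ℕ) and for δ = 0 (where the grid [0,T]^d ∩ 0·ℤ^d is interpreted as [0,T]^d ∩ ℚ_*^d), the limit H_{|f|,m}^δ = lim_{T→∞} T^{-d} ∫_E sup_{t∈[0,T]^d∩δℤ^d} |f_t(z)| m(dz) exists and is a finite nonnegative real number. -/
/-!
Write `g T` for the integral of the supremum over `[0,T]^d ∩ δℤ^d`. It is monotone in `T`, and since
`[0,Nk]^d ∩ δℤ^d` is covered by `N^d` integer translates of `[0,k]^d ∩ δℤ^d`, each contributing
`g k` by the translation invariance (genA), `g (N k) ≤ N^d g k`. Taking `N = ⌈T/k⌉` gives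
`limsup g T / T^d ≤ g k / k^d`, while comparing `T` with `⌊T⌋` gives
`liminf g T / T^d ≥ inf_k g k / k^d`; so `g T / T^d` tends to `inf_k g k / k^d ≤ g 1 < ∞` (norm2).
-/
open MeasureTheory ENNReal Filter Set Topology

/-- The set `ℚ_*` of dyadic rationals. -/
def dyadicSet : Set ℝ := {x | ∃ k : ℤ, ∃ n : ℕ, x = (k : ℝ) / 2 ^ n}

/-- The grid `δ ℤ^d` for `δ > 0`, with the convention that for `δ = 0` it is `ℚ_*^d`. -/
noncomputable def dyadicGrid (d : ℕ) (δ : ℝ) : Set (Fin d → ℝ) :=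
  if δ = 0 then {t | ∀ i, t i ∈ dyadicSet} else {t | ∀ i, ∃ k : ℤ, t i = δ * k}

/-- `∫_E sup_{t ∈ S} |f_t(z)| m(dz)`. -/
noncomputable def isupFun {E : Type*} [MeasurableSpace E] (m : Measure E) {d : ℕ}
    (f : (Fin d → ℝ) → E → ℝ) (S : Set (Fin d → ℝ)) : ℝ≥0∞ :=
  ∫⁻ z, ⨆ t ∈ S, ENNReal.ofReal |f t z| ∂m

lemma dyadicSet_countable : dyadicSet.Countable :=
  (Set.countable_range fun p : ℤ × ℕ => (p.1 : ℝ) / 2 ^ p.2).mono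
    (by rintro _ ⟨k, n, rfl⟩; exact ⟨(k, n), rfl⟩)

section Grid

variable {d : ℕ}

lemma mem_dyadicGrid_zero {t : Fin d → ℝ} : t ∈ dyadicGrid d 0 ↔ ∀ i, t i ∈ dyadicSet := by
  simp [dyadicGrid]

lemma mem_dyadicGrid_of_ne_zero {δ : ℝ} (hδ : δ ≠ 0) {t : Fin d → ℝ} :
    t ∈ dyadicGrid d δ ↔ ∀ i, t i ∈ AddSubgroup.zmultiples δ := by
  simp [dyadicGrid, hδ, AddSubgroup.mem_zmultiples_iff, eq_comm, mul_comm]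

lemma dyadicGrid_zero_countable : (dyadicGrid d 0).Countable := by
  simpa only [dyadicGrid, if_pos] using Set.countable_pi fun _ : Fin d => dyadicSet_countable

lemma isClosed_dyadicGrid {δ : ℝ} (hδ : δ ≠ 0) : IsClosed (dyadicGrid d δ) := by
  have hgrid : dyadicGrid d δ = Set.univ.pi fun _ => (AddSubgroup.zmultiples δ : Set ℝ) := by
    ext t
    simp [mem_dyadicGrid_of_ne_zero hδ]
  rw [hgrid]
  exact isClosed_set_pi fun _ _ => AddSubgroup.isClosed_of_discrete

def IsDyadicMesh (δ : ℝ) : Prop :=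
  δ = 0 ∨ ∃ n : ℕ, δ = ((2 : ℝ) ^ n)⁻¹

namespace IsDyadicMesh

variable {δ : ℝ}

lemma dyadicGrid_subset (hδ : IsDyadicMesh δ) : dyadicGrid d δ ⊆ dyadicGrid d 0 := by
  rcases hδ with rfl | ⟨n, rfl⟩
  · exact subset_rfl
  intro t ht
  rw [mem_dyadicGrid_of_ne_zero (by positivity)] at ht
  refine mem_dyadicGrid_zero.2 fun i => ?_
  obtain ⟨k, hk⟩ := AddSubgroup.mem_zmultiples_iff.1 (ht i)
  exact ⟨k, n, by rw [← hk, zsmul_eq_mul, div_eq_mul_inv]⟩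

lemma add_intCast_mem_dyadicGrid (hδ : IsDyadicMesh δ) {t : Fin d → ℝ}
    (ht : t ∈ dyadicGrid d δ) (c : Fin d → ℤ) : t + (fun i => (c i : ℝ)) ∈ dyadicGrid d δ := by
  rcases hδ with rfl | ⟨n, rfl⟩
  · refine mem_dyadicGrid_zero.2 fun i => ?_
    obtain ⟨k, l, hk⟩ := mem_dyadicGrid_zero.1 ht i
    refine ⟨k + c i * 2 ^ l, l, ?_⟩
    simp only [Pi.add_apply, hk]
    push_cast
    field_simp
  · have hδ : ((2 : ℝ) ^ n)⁻¹ ≠ 0 := by positivity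
    rw [mem_dyadicGrid_of_ne_zero hδ] at ht ⊢
    refine fun i => add_mem (ht i) (AddSubgroup.mem_zmultiples_iff.2 ⟨c i * 2 ^ n, ?_⟩)
    rw [zsmul_eq_mul]
    push_cast
    field_simp

lemma exists_isCompact_inter_dyadicGrid_zero (hδ : IsDyadicMesh δ) {K : Set (Fin d → ℝ)}
    (hK : IsCompact K) :
    ∃ K' : Set (Fin d → ℝ), IsCompact K' ∧ K' ∩ dyadicGrid d 0 = K ∩ dyadicGrid d δ := by
  rcases hδ with rfl | ⟨n, rfl⟩
  · exact ⟨K, hK, rfl⟩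
  · refine ⟨K ∩ dyadicGrid d ((2 : ℝ) ^ n)⁻¹,
      hK.inter_right (isClosed_dyadicGrid (by positivity)), ?_⟩
    exact Set.inter_eq_left.2 (Set.inter_subset_right.trans
      (dyadicGrid_subset (Or.inr ⟨n, rfl⟩)))

end IsDyadicMesh

lemma pickandsCube_mono_s16 : Monotone (pickandsCube d) :=
  fun _ _ h => Set.Icc_subset_Icc le_rfl fun _ => h

lemma isCompact_pickandsCube (T : ℝ) : IsCompact (pickandsCube d T) :=
  isCompact_Icc

end Grid

lemma exists_lt_sub_nat_mul_mem_Icc {a x : ℝ} {N : ℕ} (ha : 0 < a) (hN : 0 < N)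
    (hx : x ∈ Set.Icc 0 (N * a)) : ∃ j < N, x - j * a ∈ Set.Icc 0 a := by
  rcases hx.2.lt_or_eq with hlt | heq
  · have hxa : 0 ≤ x / a := div_nonneg hx.1 ha.le
    refine ⟨⌊x / a⌋₊, (Nat.floor_lt hxa).2 ((div_lt_iff₀ ha).2 hlt), ?_, ?_⟩
    · have := (le_div_iff₀ ha).1 (Nat.floor_le hxa)
      linarith
    · have := (div_lt_iff₀ ha).1 (Nat.lt_floor_add_one (x / a))
      linarith
  · refine ⟨N - 1, Nat.sub_one_lt hN.ne', ?_⟩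
    rw [heq, Nat.cast_pred hN]
    constructor <;> nlinarith

section IsupFun

variable {E : Type*} [MeasurableSpace E] {m : Measure E} {d : ℕ} {f : (Fin d → ℝ) → E → ℝ}

lemma isupFun_mono {S S' : Set (Fin d → ℝ)} (h : S ⊆ S') : isupFun m f S ≤ isupFun m f S' :=
  lintegral_mono fun _ => biSup_mono fun _ ht => h ht

lemma isupFun_biUnion_le (hmeas : ∀ t, Measurable (f t)) {ι : Type*} (J : Finset ι)
    {S : ι → Set (Fin d → ℝ)} (hS : ∀ j ∈ J, (S j).Countable) :
    isupFun m f (⋃ j ∈ J, S j) ≤ ∑ j ∈ J, isupFun m f (S j) := by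
  simp only [isupFun]
  rw [← lintegral_finsetSum _ fun j hj =>
    Measurable.biSup _ (hS j hj) fun t _ => (hmeas t).abs.ennreal_ofReal]
  refine lintegral_mono fun z => ?_
  simp only [iSup_iUnion]
  exact iSup₂_le fun j hj => Finset.single_le_sum
    (f := fun j => ⨆ t ∈ S j, ENNReal.ofReal |f t z|) (fun _ _ => zero_le) hj

lemma isupFun_image_add (S : Set (Fin d → ℝ)) (c : Fin d → ℝ) :
    isupFun m f ((· + c) '' S) = isupFun m (fun t z => f (t + c) z) S :=
  lintegral_congr fun _ => iSup_image

lemma isupFun_image_add_intCast (hgenA : ∀ K : Set (Fin d → ℝ), IsCompact K → ∀ c : Fin d → ℝ,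
      (∀ i, c i ∈ dyadicSet) →
      isupFun m (fun t z => f (t + c) z) (K ∩ dyadicGrid d 0) =
        isupFun m f (K ∩ dyadicGrid d 0))
    {δ : ℝ} (hδ : IsDyadicMesh δ) {K : Set (Fin d → ℝ)} (hK : IsCompact K) (c : Fin d → ℤ) :
    isupFun m f ((· + fun i => (c i : ℝ)) '' (K ∩ dyadicGrid d δ)) =
      isupFun m f (K ∩ dyadicGrid d δ) := by
  obtain ⟨K', hK', hK'δ⟩ := hδ.exists_isCompact_inter_dyadicGrid_zero hK
  rw [← hK'δ, isupFun_image_add, hgenA K' hK' _ fun i => ⟨c i, 0, by simp⟩]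

end IsupFun

lemma IsDyadicMesh.pickandsCube_mul_inter_subset {d : ℕ} {δ : ℝ} (hδ : IsDyadicMesh δ)
    {k N : ℕ} (hk : 0 < k) (hN : 0 < N) :
    pickandsCube d (N * k) ∩ dyadicGrid d δ ⊆
      ⋃ j ∈ (Finset.univ : Finset (Fin d → Fin N)),
        (· + fun i => (((j i : ℕ) * k : ℤ) : ℝ)) '' (pickandsCube d k ∩ dyadicGrid d δ) := by
  rintro t ⟨htT, htδ⟩
  choose j hjN hj using fun i =>
    exists_lt_sub_nat_mul_mem_Icc (Nat.cast_pos.2 hk) hN ⟨htT.1 i, htT.2 i⟩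
  refine Set.mem_biUnion (Finset.mem_univ fun i => ⟨j i, hjN i⟩)
    ⟨t + fun i => ((-((j i : ℕ) * k : ℤ) : ℤ) : ℝ), ⟨⟨fun i => ?_, fun i => ?_⟩,
      hδ.add_intCast_mem_dyadicGrid htδ _⟩, ?_⟩
  · simpa [sub_eq_add_neg] using (hj i).1
  · simpa [sub_eq_add_neg] using (hj i).2
  · ext i
    simp

lemma IsDyadicMesh.isupFun_pickandsCube_mul_le {E : Type*} [MeasurableSpace E] {m : Measure E}
    {d : ℕ} {f : (Fin d → ℝ) → E → ℝ} (hmeas : ∀ t, Measurable (f t))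
    (hgenA : ∀ K : Set (Fin d → ℝ), IsCompact K → ∀ c : Fin d → ℝ,
      (∀ i, c i ∈ dyadicSet) →
      isupFun m (fun t z => f (t + c) z) (K ∩ dyadicGrid d 0) =
        isupFun m f (K ∩ dyadicGrid d 0))
    {δ : ℝ} (hδ : IsDyadicMesh δ) {k N : ℕ} (hk : 0 < k) (hN : 0 < N) :
    isupFun m f (pickandsCube d (N * k) ∩ dyadicGrid d δ) ≤
      N ^ d * isupFun m f (pickandsCube d k ∩ dyadicGrid d δ) := by
  have hcount : (pickandsCube d k ∩ dyadicGrid d δ).Countable :=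
    dyadicGrid_zero_countable.mono (Set.inter_subset_right.trans hδ.dyadicGrid_subset)
  calc isupFun m f (pickandsCube d (N * k) ∩ dyadicGrid d δ)
      ≤ ∑ j : Fin d → Fin N, isupFun m f
          ((· + fun i => (((j i : ℕ) * k : ℤ) : ℝ)) '' (pickandsCube d k ∩ dyadicGrid d δ)) :=
        (isupFun_mono (hδ.pickandsCube_mul_inter_subset hk hN)).trans
          (isupFun_biUnion_le hmeas _ fun _ _ => hcount.image _)
    _ = ∑ _j : Fin d → Fin N, isupFun m f (pickandsCube d k ∩ dyadicGrid d δ) :=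
        Finset.sum_congr rfl fun j _ =>
          isupFun_image_add_intCast hgenA hδ (isCompact_pickandsCube _) _
    _ = N ^ d * isupFun m f (pickandsCube d k ∩ dyadicGrid d δ) := by
        simp

section ScaledLimit

variable {g : ℝ → ℝ≥0∞} {d : ℕ}

lemma Monotone.le_liminf_div_pow (hg : Monotone g) :
    ⨅ (k : ℕ) (_ : 0 < k), g k / ENNReal.ofReal ((k : ℝ) ^ d) ≤
      liminf (fun T => g T / ENNReal.ofReal (T ^ d)) atTop := by
  set H := ⨅ (k : ℕ) (_ : 0 < k), g k / ENNReal.ofReal ((k : ℝ) ^ d)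
  have hbound : ∀ᶠ T in atTop, H * ENNReal.ofReal ((1 - 1 / T) ^ d) ≤
      g T / ENNReal.ofReal (T ^ d) := by
    filter_upwards [eventually_ge_atTop 1] with T hT
    have hT0 : 0 < T := by linarith
    have h1T : 0 ≤ 1 - 1 / T := sub_nonneg.2 ((div_le_one hT0).2 hT)
    set M := ⌊T⌋₊
    have hM : 0 < M := Nat.floor_pos.2 hT
    have hHM : H * ENNReal.ofReal ((M : ℝ) ^ d) ≤ g M :=
      (ENNReal.le_div_iff_mul_le (Or.inl (by simp [hM.ne'])) (Or.inl ENNReal.ofReal_ne_top)).1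
        (biInf_le (fun k : ℕ => g k / ENNReal.ofReal ((k : ℝ) ^ d)) hM)
    rw [ENNReal.le_div_iff_mul_le (Or.inl (ENNReal.ofReal_pos.2 (pow_pos hT0 d)).ne')
      (Or.inl ENNReal.ofReal_ne_top)]
    calc H * ENNReal.ofReal ((1 - 1 / T) ^ d) * ENNReal.ofReal (T ^ d)
        = H * ENNReal.ofReal ((T - 1) ^ d) := by
          rw [mul_assoc, ← ENNReal.ofReal_mul (pow_nonneg h1T d), ← mul_pow]
          congr 3
          field_simp
      _ ≤ H * ENNReal.ofReal ((M : ℝ) ^ d) := by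
          gcongr
          exact (Nat.sub_one_lt_floor T).le
      _ ≤ g M := hHM
      _ ≤ g T := hg (Nat.floor_le hT0.le)
  have hlim : Tendsto (fun T : ℝ => H * ENNReal.ofReal ((1 - 1 / T) ^ d)) atTop (𝓝 H) := by
    have h : Tendsto (fun T : ℝ => (1 - 1 / T) ^ d) atTop (𝓝 1) := by
      simpa using ((tendsto_const_nhds (x := (1 : ℝ))).sub tendsto_inv_atTop_zero).pow d
    simpa using ENNReal.Tendsto.const_mul (ENNReal.tendsto_ofReal h) (Or.inl (by simp))
  exact hlim.liminf_eq.symm.trans_le (liminf_le_liminf hbound)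

lemma Monotone.limsup_div_pow_le (hg : Monotone g)
    (hscale : ∀ k N : ℕ, 0 < k → 0 < N → g (N * k) ≤ N ^ d * g k) {k : ℕ} (hk : 0 < k) :
    limsup (fun T => g T / ENNReal.ofReal (T ^ d)) atTop ≤
      g k / ENNReal.ofReal ((k : ℝ) ^ d) := by
  have hk' : (0 : ℝ) < k := Nat.cast_pos.2 hk
  have hbound : ∀ᶠ T in atTop, g T / ENNReal.ofReal (T ^ d) ≤
      g k * ENNReal.ofReal ((1 / k + 1 / T) ^ d) := by
    filter_upwards [eventually_gt_atTop 0] with T hT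
    set N := ⌈T / k⌉₊
    have hN : 0 < N := Nat.ceil_pos.2 (div_pos hT hk')
    rw [ENNReal.div_le_iff (ENNReal.ofReal_pos.2 (pow_pos hT d)).ne' ENNReal.ofReal_ne_top]
    calc g T ≤ g (N * k) := hg ((div_le_iff₀ hk').1 (Nat.le_ceil _))
      _ ≤ N ^ d * g k := hscale k N hk hN
      _ = g k * ENNReal.ofReal ((N : ℝ) ^ d) := by
          rw [mul_comm, ENNReal.ofReal_pow (Nat.cast_nonneg N), ENNReal.ofReal_natCast]
      _ ≤ g k * ENNReal.ofReal ((T / k + 1) ^ d) := by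
          gcongr
          exact (Nat.ceil_lt_add_one (div_nonneg hT.le hk'.le)).le
      _ = g k * ENNReal.ofReal ((1 / k + 1 / T) ^ d) * ENNReal.ofReal (T ^ d) := by
          rw [mul_assoc, ← ENNReal.ofReal_mul (by positivity), ← mul_pow]
          congr 3
          field_simp
  have hlim : Tendsto (fun T : ℝ => g k * ENNReal.ofReal ((1 / k + 1 / T) ^ d)) atTop
      (𝓝 (g k * ENNReal.ofReal ((1 / k) ^ d))) := by
    have h : Tendsto (fun T : ℝ => (1 / k + 1 / T) ^ d) atTop (𝓝 ((1 / k) ^ d)) := by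
      simpa using ((tendsto_const_nhds (x := (1 / k : ℝ))).add tendsto_inv_atTop_zero).pow d
    exact ENNReal.Tendsto.const_mul (ENNReal.tendsto_ofReal h)
      (Or.inl (ENNReal.ofReal_pos.2 (by positivity)).ne')
  calc limsup (fun T => g T / ENNReal.ofReal (T ^ d)) atTop
      ≤ g k * ENNReal.ofReal ((1 / k) ^ d) := hlim.limsup_eq ▸ limsup_le_limsup hbound
    _ = g k / ENNReal.ofReal ((k : ℝ) ^ d) := by
        rw [one_div, inv_pow, ENNReal.ofReal_inv_of_pos (by positivity), div_eq_mul_inv]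

theorem Monotone.tendsto_div_pow_atTop (hg : Monotone g)
    (hscale : ∀ k N : ℕ, 0 < k → 0 < N → g (N * k) ≤ N ^ d * g k) :
    Tendsto (fun T => g T / ENNReal.ofReal (T ^ d)) atTop
      (𝓝 (⨅ (k : ℕ) (_ : 0 < k), g k / ENNReal.ofReal ((k : ℝ) ^ d))) :=
  tendsto_of_le_liminf_of_limsup_le hg.le_liminf_div_pow
    (le_iInf₂ fun _ hk => hg.limsup_div_pow_le hscale hk)

end ScaledLimit

theorem stable_pickands_constant_exists_general
    {E : Type*} [MeasurableSpace E] (m : Measure E)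
    (d : ℕ) (f : (Fin d → ℝ) → E → ℝ)
    (hmeas : ∀ t, Measurable (f t))
    (hnorm2 : ∀ K : Set (Fin d → ℝ), IsCompact K →
      isupFun m f (K ∩ dyadicGrid d 0) < ⊤)
    (hgenA : ∀ K : Set (Fin d → ℝ), IsCompact K → ∀ c : Fin d → ℝ,
      (∀ i, c i ∈ dyadicSet) →
      isupFun m (fun t z => f (t + c) z) (K ∩ dyadicGrid d 0) =
        isupFun m f (K ∩ dyadicGrid d 0)) :
    ∀ δ : ℝ, (δ = 0 ∨ ∃ n : ℕ, δ = ((2 : ℝ) ^ n)⁻¹) →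
      ∃ H : ℝ≥0∞, H ≠ ⊤ ∧
        Tendsto (fun T : ℝ =>
            isupFun m f (pickandsCube d T ∩ dyadicGrid d δ) / ENNReal.ofReal (T ^ d))
          atTop (𝓝 H) := by
  intro δ (hδ : IsDyadicMesh δ)
  have hg : Monotone fun T => isupFun m f (pickandsCube d T ∩ dyadicGrid d δ) :=
    fun _ _ hT => isupFun_mono (Set.inter_subset_inter_left _ (pickandsCube_mono_s16 hT))
  refine ⟨_, ?_, hg.tendsto_div_pow_atTop fun k N hk hN =>
    hδ.isupFun_pickandsCube_mul_le hmeas hgenA hk hN⟩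
  have hg1 : isupFun m f (pickandsCube d 1 ∩ dyadicGrid d δ) < ⊤ :=
    (isupFun_mono (Set.inter_subset_inter_right _ hδ.dyadicGrid_subset)).trans_lt
      (hnorm2 _ (isCompact_pickandsCube 1))
  refine ne_top_of_le_ne_top ?_ (iInf₂_le 1 one_pos)
  simpa using hg1.ne

/-- under (norm2) and (genA), for every `δ = 2^{-n}` and for `δ = 0`
(grid `ℚ_*^d`), the limit
`H_{|f|,m}^δ = lim_{T→∞} T^{-d} ∫_E sup_{t∈[0,T]^d∩δℤ^d} |f_t(z)| m(dz)` exists and is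
a finite nonnegative number. -/
theorem stable_pickands_constant_exists
    {E : Type*} [MeasurableSpace E] (m : Measure E) [SigmaFinite m]
    (d : ℕ) (hd : 0 < d) (f : (Fin d → ℝ) → E → ℝ)
    (hmeas : ∀ t, Measurable (f t))
    (hint : ∀ t, (∫⁻ z, ENNReal.ofReal |f t z| ∂m) < ⊤)
    (hnorm2 : ∀ K : Set (Fin d → ℝ), IsCompact K →
      isupFun m f (K ∩ dyadicGrid d 0) < ⊤)
    (hgenA : ∀ K : Set (Fin d → ℝ), IsCompact K → ∀ c : Fin d → ℝ,
      (∀ i, c i ∈ dyadicSet) →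
      isupFun m (fun t z => f (t + c) z) (K ∩ dyadicGrid d 0) =
        isupFun m f (K ∩ dyadicGrid d 0)) :
    ∀ δ : ℝ, (δ = 0 ∨ ∃ n : ℕ, δ = ((2 : ℝ) ^ n)⁻¹) →
      ∃ H : ℝ≥0∞, H ≠ ⊤ ∧
        Tendsto (fun T : ℝ =>
            isupFun m f (pickandsCube d T ∩ dyadicGrid d δ) / ENNReal.ofReal (T ^ d))
          atTop (𝓝 H) :=
  stable_pickands_constant_exists_general m d f hmeas hnorm2 hgenA
end
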